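/- arXiv:1911.02335 — 10 statements merged into one kernel-verified Lean document; each statement's English description precedes it below -/
import Mathlib

section
/- Let E be a real locally convex topological vector space. Let Ω ⊆ E be a nonempty open convex cone and let f : Ω → ℝ be a continuous, positively homogeneous, convex function. Then there exists a unique subset C of the topological dual E′ with the following properties: C is convex and closed in the weak-* topology; C is semi-equicontinuous; the interior of B(−C) = {x ∈ E : s_C(x) < ∞} is exactly Ω; and s_C(x) = f(x) for every x ∈ Ω. (This is the Duality Theorem: C ↦ s_C|_{B(−C)⁰} is a bijection from semi-equicontinuous weak-*-closed convex subsets of E′ onto continuous positively homogeneous convex functions on nonempty open convex cones.) -/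
open Set Filter Topology

/-! The set `C` must be the set of continuous linear minorants of `f` on `Ω`. As `Ω` is a cone,
the strict epigraph of `f` is an open convex cone in `E × ℝ`; separating it from `(x, f x)` gives
a minorant that is exact at `x`, so `s_C = f` on `Ω`. A point `z ∉ Ω` is separated from `Ω` by
some `γ` with `γ < 0` on `Ω` and `γ z ≥ 0`; then `C` contains the ray `α₀ + t γ`, `t > 0`, so
`γ ≤ 0` on `B(-C)`, and since a nonzero functional is an open map, `γ < 0` on the interior of
`B(-C)`, which therefore misses `z`.

For uniqueness, a weak-* closed convex `C'` is an intersection of half-spaces `{α | α z ≤ m}`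
(weak-* continuous functionals are evaluations), and every minorant `β` of `f = s_{C'}` lies in
each of them: `β ≤ s_{C'}` on `Ω = interior B(-C')` passes to `z` along a segment from a point
of `Ω`. -/

/-- The support functional `s_C : E → [-∞,∞]` of a set `C` of continuous linear
functionals, `s_C(x) = sup_{α ∈ C} α(x)`. -/
noncomputable def supportFunctional {E : Type*} [AddCommGroup E] [Module ℝ E]
    [TopologicalSpace E] (C : Set (WeakDual ℝ E)) (x : E) : EReal :=
  sSup ((fun α : WeakDual ℝ E => (α x : EReal)) '' C)

/-- `C ⊆ E'` is semi-equicontinuous if its support functional is bounded above on some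
nonempty open subset of `E`. -/
def SemiEquicontinuous {E : Type*} [AddCommGroup E] [Module ℝ E]
    [TopologicalSpace E] (C : Set (WeakDual ℝ E)) : Prop :=
  ∃ U : Set E, U.Nonempty ∧ IsOpen U ∧ ∃ M : ℝ, ∀ α ∈ C, ∀ u ∈ U, α u ≤ M

lemma nonpos_and_nonneg_of_forall_pos_mul_lt {a u : ℝ} (h : ∀ t : ℝ, 0 < t → t * a < u) :
    a ≤ 0 ∧ 0 ≤ u := by
  constructor
  · by_contra! ha
    have := h ((|u| + 1) / a) (by positivity)
    rw [div_mul_cancel₀ _ ha.ne'] at this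
    linarith [le_abs_self u]
  · by_contra! hu
    have ha : a < 0 := by linarith [h 1 one_pos]
    have := h (u / a) (div_pos_of_neg_of_neg hu ha)
    rw [div_mul_cancel₀ _ ha.ne] at this
    exact lt_irrefl u this

section TopologicalVectorSpace

variable {E : Type*} [AddCommGroup E] [Module ℝ E] [TopologicalSpace E]
  [IsTopologicalAddGroup E] [ContinuousSMul ℝ E]

theorem ContinuousLinearMap.apply_lt_of_forall_le_of_isOpen {γ : StrongDual ℝ E} (hγ : γ ≠ 0)
    {U : Set E} (hU : IsOpen U) {a : ℝ} (h : ∀ w ∈ U, γ w ≤ a) {z : E} (hz : z ∈ U) :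
    γ z < a := by
  have hsub : γ '' U ⊆ interior (Iic a) :=
    interior_maximal (image_subset_iff.2 h) (γ.isOpenMap_of_ne_zero hγ U hU)
  rw [interior_Iic] at hsub
  exact hsub (mem_image_of_mem γ hz)

theorem exists_neg_on_of_notMem_of_isOpen_cone {K : Set E} (hne : K.Nonempty)
    (hopen : IsOpen K) (hconv : Convex ℝ K) (hcone : ∀ t : ℝ, 0 < t → ∀ x ∈ K, t • x ∈ K)
    {z : E} (hz : z ∉ K) :
    ∃ γ : StrongDual ℝ E, (∀ y ∈ K, γ y < 0) ∧ 0 ≤ γ z := by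
  obtain ⟨γ, u, hγK, hγz⟩ := geometric_hahn_banach_open hconv hopen (convex_singleton z)
    (disjoint_singleton_right.2 hz)
  have hray : ∀ y ∈ K, γ y ≤ 0 ∧ 0 ≤ u := fun y hy =>
    nonpos_and_nonneg_of_forall_pos_mul_lt fun t ht => by
      simpa only [map_smul, smul_eq_mul] using hγK _ (hcone t ht y hy)
  obtain ⟨x₀, hx₀⟩ := hne
  have hγ : γ ≠ 0 := by
    rintro rfl
    have := hγK x₀ hx₀
    have := hγz z rfl
    simp only [zero_apply] at *
    linarith
  refine ⟨γ, fun y hy => ?_, (hray x₀ hx₀).2.trans (hγz z rfl)⟩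
  exact γ.apply_lt_of_forall_le_of_isOpen hγ hopen (fun w hw => (hray w hw).1) hy

theorem ConvexOn.exists_exact_minorant_of_isOpen_cone {Ω : Set E} {f : E → ℝ}
    (hfconv : ConvexOn ℝ Ω f) (hΩopen : IsOpen Ω)
    (hΩcone : ∀ t : ℝ, 0 < t → ∀ x ∈ Ω, t • x ∈ Ω) (hfcont : ContinuousOn f Ω)
    (hfhom : ∀ t : ℝ, 0 < t → ∀ x ∈ Ω, f (t • x) = t * f x) {x : E} (hx : x ∈ Ω) :
    ∃ α : StrongDual ℝ E, (∀ y ∈ Ω, α y ≤ f y) ∧ α x = f x := by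
  set S : Set (E × ℝ) := {p | p.1 ∈ Ω ∧ f p.1 < p.2}
  have hSopen : IsOpen S := by
    have := (hfcont.comp continuousOn_fst fun p hp => hp.1).sub continuousOn_snd
      |>.isOpen_inter_preimage (hΩopen.prod isOpen_univ) (isOpen_Iio (a := 0))
    convert this using 1
    ext p
    simp [S]
  have hScone : ∀ t : ℝ, 0 < t → ∀ p ∈ S, t • p ∈ S := fun t ht p ⟨hp, hfp⟩ =>
    ⟨hΩcone t ht _ hp, by simpa [hfhom t ht _ hp] using mul_lt_mul_of_pos_left hfp ht⟩
  have hSne : S.Nonempty := ⟨(x, f x + 1), hx, by simp⟩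
  have hxS : (x, f x) ∉ S := fun h => lt_irrefl _ h.2
  obtain ⟨φ, hφS, hφx⟩ := exists_neg_on_of_notMem_of_isOpen_cone hSne hSopen
    hfconv.convex_strict_epigraph hScone hxS
  set β : StrongDual ℝ E := φ.comp (ContinuousLinearMap.inl ℝ E ℝ)
  set c : ℝ := φ (0, 1)
  have hsplit : ∀ y t, φ (y, t) = β y + t * c := fun y t => by
    rw [show ((y, t) : E × ℝ) = (y, 0) + t • (0, 1) by simp, map_add, map_smul, smul_eq_mul]
    rfl
  have hc : 0 < -c := by
    have := hφS (x, f x + 1) ⟨hx, by simp⟩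
    rw [hsplit] at this hφx
    linarith
  -- the hyperplane `β y + t * c = 0` supporting the epigraph is the graph of `(-c)⁻¹ • β`
  have hle : ∀ y ∈ Ω, ((-c)⁻¹ • β) y ≤ f y := fun y hy => le_of_forall_gt fun t ht => by
    have := hφS (y, t) ⟨hy, ht⟩
    rw [hsplit] at this
    simp only [smul_apply, smul_eq_mul, inv_mul_lt_iff₀ hc]
    linarith
  refine ⟨(-c)⁻¹ • β, hle, le_antisymm (hle x hx) ?_⟩
  rw [hsplit] at hφx
  simp only [smul_apply, smul_eq_mul, le_inv_mul_iff₀ hc]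
  linarith

end TopologicalVectorSpace
instance WeakDual.instLocallyConvexSpace {E : Type*} [AddCommGroup E] [Module ℝ E]
    [TopologicalSpace E] : LocallyConvexSpace ℝ (WeakDual ℝ E) :=
  WeakBilin.locallyConvexSpace

theorem WeakDual.exists_eq_eval {E : Type*} [AddCommGroup E] [Module ℝ E] [TopologicalSpace E]
    (φ : StrongDual ℝ (WeakDual ℝ E)) : ∃ z : E, ∀ α : WeakDual ℝ E, φ α = α z := by
  obtain ⟨z, rfl⟩ := LinearMap.dualEmbedding_surjective (topDualPairing ℝ E) φ
  exact ⟨z, fun _ => rfl⟩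

section SupportFunctional

variable {E : Type*} [AddCommGroup E] [Module ℝ E] [TopologicalSpace E]

/-- `B(-C)` in the notation of the duality theorem. -/
def barrierCone (C : Set (WeakDual ℝ E)) : Set E := {x | supportFunctional C x < ⊤}

lemma le_supportFunctional {C : Set (WeakDual ℝ E)} {α : WeakDual ℝ E} (hα : α ∈ C)
    (x : E) : (α x : EReal) ≤ supportFunctional C x :=
  le_sSup ⟨α, hα, rfl⟩

lemma supportFunctional_le {C : Set (WeakDual ℝ E)} {x : E} {r : ℝ}
    (h : ∀ α ∈ C, α x ≤ r) : supportFunctional C x ≤ r :=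
  sSup_le <| forall_mem_image.2 fun α hα => EReal.coe_le_coe_iff.2 (h α hα)

lemma mem_barrierCone_iff {C : Set (WeakDual ℝ E)} {x : E} :
    x ∈ barrierCone C ↔ ∃ r : ℝ, ∀ α ∈ C, α x ≤ r := by
  refine ⟨fun h => ?_, fun ⟨r, hr⟩ => (supportFunctional_le hr).trans_lt (EReal.coe_lt_top r)⟩
  rcases C.eq_empty_or_nonempty with rfl | ⟨α₀, hα₀⟩
  · exact ⟨0, by simp⟩
  have hbot : supportFunctional C x ≠ ⊥ :=
    ((EReal.bot_lt_coe _).trans_le (le_supportFunctional hα₀ x)).ne'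
  refine ⟨(supportFunctional C x).toReal, fun α hα => EReal.coe_le_coe_iff.1 ?_⟩
  rw [EReal.coe_toReal h.ne hbot]
  exact le_supportFunctional hα x

lemma convex_barrierCone (C : Set (WeakDual ℝ E)) : Convex ℝ (barrierCone C) := by
  intro p hp q hq a b ha hb _
  obtain ⟨r₁, h₁⟩ := mem_barrierCone_iff.1 hp
  obtain ⟨r₂, h₂⟩ := mem_barrierCone_iff.1 hq
  refine mem_barrierCone_iff.2 ⟨a * r₁ + b * r₂, fun α hα => ?_⟩
  simp only [map_add, map_smul, smul_eq_mul]
  gcongr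
  exacts [h₁ α hα, h₂ α hα]

lemma apply_nonpos_of_mem_barrierCone {C : Set (WeakDual ℝ E)} {α₀ γ : WeakDual ℝ E}
    (hray : ∀ t : ℝ, 0 < t → α₀ + t • γ ∈ C) {w : E} (hw : w ∈ barrierCone C) :
    γ w ≤ 0 := by
  obtain ⟨r, hr⟩ := mem_barrierCone_iff.1 hw
  refine (nonpos_and_nonneg_of_forall_pos_mul_lt (u := r - α₀ w + 1) fun t ht => ?_).1
  have := hr _ (hray t ht)
  change α₀ w + t * γ w ≤ r at this
  linarith

end SupportFunctional

section LinearMinorants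

variable {E : Type*} [AddCommGroup E] [Module ℝ E] [TopologicalSpace E]

def linearMinorants (Ω : Set E) (f : E → ℝ) : Set (WeakDual ℝ E) :=
  {α | ∀ y ∈ Ω, α y ≤ f y}

lemma convex_linearMinorants (Ω : Set E) (f : E → ℝ) : Convex ℝ (linearMinorants Ω f) := by
  intro α hα β hβ a b ha hb hab y hy
  change a * α y + b * β y ≤ f y
  calc a * α y + b * β y ≤ a * f y + b * f y := by gcongr; exacts [hα y hy, hβ y hy]
    _ = f y := by rw [← add_mul, hab, one_mul]

lemma isClosed_linearMinorants (Ω : Set E) (f : E → ℝ) : IsClosed (linearMinorants Ω f) := by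
  simp only [linearMinorants, ofPred_forall]
  exact isClosed_biInter fun y _ => isClosed_le (WeakDual.eval_continuous y) continuous_const

lemma semiEquicontinuous_linearMinorants {Ω : Set E} {f : E → ℝ} (hne : Ω.Nonempty)
    (hopen : IsOpen Ω) (hfcont : ContinuousOn f Ω) :
    SemiEquicontinuous (linearMinorants Ω f) := by
  obtain ⟨x₀, hx₀⟩ := hne
  exact ⟨Ω ∩ f ⁻¹' Iio (f x₀ + 1), ⟨x₀, hx₀, by simp⟩,
    hfcont.isOpen_inter_preimage hopen isOpen_Iio, f x₀ + 1,
    fun α hα u hu => (hα u hu.1).trans hu.2.le⟩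

variable {Ω : Set E} {f : E → ℝ}

lemma supportFunctional_linearMinorants
    (hexact : ∀ x ∈ Ω, ∃ α ∈ linearMinorants Ω f, α x = f x) {x : E} (hx : x ∈ Ω) :
    supportFunctional (linearMinorants Ω f) x = f x := by
  obtain ⟨α, hα, hαx⟩ := hexact x hx
  exact le_antisymm (supportFunctional_le fun β hβ => hβ x hx)
    (hαx ▸ le_supportFunctional hα x)

variable [IsTopologicalAddGroup E] [ContinuousSMul ℝ E]

lemma interior_barrierCone_linearMinorants (hne : Ω.Nonempty) (hopen : IsOpen Ω)
    (hconv : Convex ℝ Ω) (hcone : ∀ t : ℝ, 0 < t → ∀ x ∈ Ω, t • x ∈ Ω)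
    (hexact : ∀ x ∈ Ω, ∃ α ∈ linearMinorants Ω f, α x = f x) :
    interior (barrierCone (linearMinorants Ω f)) = Ω := by
  refine Subset.antisymm (fun z hz => ?_) (interior_maximal (fun x hx => ?_) hopen)
  · by_contra hzΩ
    obtain ⟨x₀, hx₀⟩ := hne
    obtain ⟨α₀, hα₀, -⟩ := hexact x₀ hx₀
    obtain ⟨γ, hγΩ, hγz⟩ :=
      exists_neg_on_of_notMem_of_isOpen_cone ⟨x₀, hx₀⟩ hopen hconv hcone hzΩ
    have hray : ∀ t : ℝ, 0 < t → α₀ + t • StrongDual.toWeakDual γ ∈ linearMinorants Ω f :=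
      fun t ht y hy => by
        change α₀ y + t * γ y ≤ f y
        linarith [hα₀ y hy, mul_neg_of_pos_of_neg ht (hγΩ y hy)]
    have hγ : γ ≠ 0 := fun h => (hγΩ x₀ hx₀).ne (by simp [h])
    exact (γ.apply_lt_of_forall_le_of_isOpen hγ isOpen_interior
      (fun w hw => apply_nonpos_of_mem_barrierCone hray (interior_subset hw)) hz).not_ge hγz
  · change supportFunctional _ x < ⊤
    rw [supportFunctional_linearMinorants hexact hx]
    exact EReal.coe_lt_top _

end LinearMinorants

section Uniqueness

variable {E : Type*} [AddCommGroup E] [Module ℝ E] [TopologicalSpace E]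
  [IsTopologicalAddGroup E] [ContinuousSMul ℝ E]

theorem apply_le_of_le_supportFunctional_on_interior {C : Set (WeakDual ℝ E)}
    {β : WeakDual ℝ E} {x₀ z : E} {m : ℝ} (hx₀ : x₀ ∈ interior (barrierCone C))
    (hβ : ∀ y ∈ interior (barrierCone C), (β y : EReal) ≤ supportFunctional C y)
    (hz : ∀ α ∈ C, α z ≤ m) : β z ≤ m := by
  obtain ⟨r₀, hr₀⟩ := mem_barrierCone_iff.1 (interior_subset hx₀)
  have hseg : ∀ t ∈ Ioc (0 : ℝ) 1, (1 - t) * β z + t * β x₀ ≤ (1 - t) * m + t * r₀ := by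
    rintro t ⟨ht₀, ht₁⟩
    have hmem := (convex_barrierCone C).combo_self_interior_mem_interior
      (mem_barrierCone_iff.2 ⟨m, hz⟩) hx₀ (sub_nonneg.2 ht₁) ht₀ (sub_add_cancel 1 t)
    have hbound : supportFunctional C ((1 - t) • z + t • x₀) ≤ ((1 - t) * m + t * r₀ : ℝ) :=
      supportFunctional_le fun α hα => by
        simp only [map_add, map_smul, smul_eq_mul]
        gcongr
        exacts [hz α hα, hr₀ α hα]
    simpa only [map_add, map_smul, smul_eq_mul, EReal.coe_le_coe_iff] using
      (hβ _ hmem).trans hbound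
  have hlim (a b : ℝ) : Tendsto (fun t : ℝ => (1 - t) * a + t * b) (𝓝[>] 0) (𝓝 a) := by
    have hcont : Continuous fun t : ℝ => (1 - t) * a + t * b := by fun_prop
    simpa using (hcont.tendsto 0).mono_left nhdsWithin_le_nhds
  exact le_of_tendsto_of_tendsto (hlim _ _) (hlim _ _) <| by
    filter_upwards [Ioc_mem_nhdsGT zero_lt_one] using hseg

theorem eq_linearMinorants_of_supportFunctional_eq {C : Set (WeakDual ℝ E)} {Ω : Set E}
    {f : E → ℝ} (hconv : Convex ℝ C) (hclosed : IsClosed C) (hne : Ω.Nonempty)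
    (hint : interior (barrierCone C) = Ω) (hval : ∀ x ∈ Ω, supportFunctional C x = f x) :
    C = linearMinorants Ω f := by
  refine Subset.antisymm (fun α hα y hy => ?_) (fun β hβ => ?_)
  · exact EReal.coe_le_coe_iff.1 (hval y hy ▸ le_supportFunctional hα y)
  · by_contra hβC
    obtain ⟨φ, u, hφC, hφβ⟩ := geometric_hahn_banach_closed_point hconv hclosed hβC
    obtain ⟨z, hz⟩ := WeakDual.exists_eq_eval φ
    obtain ⟨x₀, hx₀⟩ := hne
    subst hint
    have hβz : β z ≤ u := apply_le_of_le_supportFunctional_on_interior hx₀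
      (fun y hy => hval y hy ▸ EReal.coe_le_coe_iff.2 (hβ y hy))
      (fun α hα => hz α ▸ (hφC α hα).le)
    exact (hz β ▸ hφβ).not_ge hβz

end Uniqueness

theorem duality_theorem_general
    {E : Type*} [AddCommGroup E] [Module ℝ E] [TopologicalSpace E]
    [IsTopologicalAddGroup E] [ContinuousSMul ℝ E]
    (Ω : Set E) (hΩne : Ω.Nonempty) (hΩopen : IsOpen Ω) (hΩconv : Convex ℝ Ω)
    (hΩcone : ∀ t : ℝ, 0 < t → ∀ x ∈ Ω, t • x ∈ Ω)
    (f : E → ℝ) (hfcont : ContinuousOn f Ω)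
    (hfhom : ∀ t : ℝ, 0 < t → ∀ x ∈ Ω, f (t • x) = t * f x)
    (hfconv : ConvexOn ℝ Ω f) :
    ∃! C : Set (WeakDual ℝ E),
      Convex ℝ C ∧ IsClosed C ∧ SemiEquicontinuous C ∧
      interior {x : E | supportFunctional C x < ⊤} = Ω ∧
      ∀ x ∈ Ω, supportFunctional C x = (f x : EReal) := by
  have hexact : ∀ x ∈ Ω, ∃ α ∈ linearMinorants Ω f, α x = f x := fun x hx =>
    hfconv.exists_exact_minorant_of_isOpen_cone hΩopen hΩcone hfcont hfhom hx
  refine ⟨linearMinorants Ω f, ⟨convex_linearMinorants Ω f, isClosed_linearMinorants Ω f,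
    semiEquicontinuous_linearMinorants hΩne hΩopen hfcont,
    interior_barrierCone_linearMinorants hΩne hΩopen hΩconv hΩcone hexact,
    fun x hx => supportFunctional_linearMinorants hexact hx⟩, ?_⟩
  rintro C ⟨hconv, hclosed, -, hint, hval⟩
  exact eq_linearMinorants_of_supportFunctional_eq hconv hclosed hΩne hint hval

/-- **Duality Theorem.** For every continuous positively homogeneous convex function `f`
on a nonempty open convex cone `Ω`, there is a unique semi-equicontinuous weak-*-closed
convex set `C ⊆ E'` with `interior B(-C) = Ω` and `s_C = f` on `Ω`. -/
theorem duality_theorem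
    {E : Type*} [AddCommGroup E] [Module ℝ E] [TopologicalSpace E]
    [IsTopologicalAddGroup E] [ContinuousSMul ℝ E] [LocallyConvexSpace ℝ E]
    (Ω : Set E) (hΩne : Ω.Nonempty) (hΩopen : IsOpen Ω) (hΩconv : Convex ℝ Ω)
    (hΩcone : ∀ t : ℝ, 0 < t → ∀ x ∈ Ω, t • x ∈ Ω)
    (f : E → ℝ) (hfcont : ContinuousOn f Ω)
    (hfhom : ∀ t : ℝ, 0 < t → ∀ x ∈ Ω, f (t • x) = t * f x)
    (hfconv : ConvexOn ℝ Ω f) :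
    ∃! C : Set (WeakDual ℝ E),
      Convex ℝ C ∧ IsClosed C ∧ SemiEquicontinuous C ∧
      interior {x : E | supportFunctional C x < ⊤} = Ω ∧
      ∀ x ∈ Ω, supportFunctional C x = (f x : EReal) :=
  duality_theorem_general Ω hΩne hΩopen hΩconv hΩcone f hfcont hfhom hfconv
end

section
/- Let J be a set and let ℓ∞(J) denote the real Banach space of bounded functions J → ℝ with the supremum norm. Let Ω ⊆ ℓ∞(J) be a nonempty open convex cone that is invariant under the natural action of the full permutation group S_J of J (i.e., f ∘ σ ∈ Ω whenever f ∈ Ω and σ is a bijection of J). Then Ω contains a constant function: there exists c ∈ ℝ such that the constant function j ↦ c belongs to Ω. -/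
/-!
Pick `f ∈ Ω` and `ε > 0` with `ball f ε ⊆ Ω`. The points whose `ε`-ball lies in `Ω` form a
convex set containing every `f ∘ σ`, so it is enough to find a convex combination of permuted
copies of `f` within `ε / 2` of a constant. For finite `J` the average over all of `S_J` is
constant. For infinite `J`, pigeonhole on the values of `f` gives `c` and a set `A` with
`#A = #J` on which `f` is `δ`-close to `c`. Placing `n` disjoint copies of `Aᶜ` inside `A`
yields permutations `τ₁, …, τₙ` such that, at each point `j`, at most one `τ_q j` leaves `A`;
the average of the `f ∘ τ_q` is then within `δ + (‖f‖ + |c|) / n` of `c`.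
-/

open scoped ENNReal lp Cardinal
open Set Metric

universe u

section

variable {J : Type u}

theorem exists_perm_preimage_subset_of_disjoint {S T : Set J}
    (hST : Disjoint S T) (e : S ≃ T) : ∃ σ : Equiv.Perm J, σ ⁻¹' S ⊆ T := by
  classical
  let u := Equiv.Set.union hST
  let π : Equiv.Perm ↥(S ∪ T) :=
    u.trans (((Equiv.sumComm S T).trans (e.symm.sumCongr e)).trans u.symm)
  refine ⟨Equiv.Perm.ofSubtype π, fun j hj => ?_⟩
  by_cases hjS : j ∈ S
  · have hσj : Equiv.Perm.ofSubtype π j = e ⟨j, hjS⟩ := by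
      rw [Equiv.Perm.ofSubtype_apply_of_mem π (Or.inl hjS)]
      simp [π, u, Equiv.Set.union_apply_left hST (a := ⟨j, Or.inl hjS⟩) hjS]
    exact absurd hj (hST.notMem_of_mem_right (hσj ▸ (e ⟨j, hjS⟩).2))
  · by_contra hjT
    rw [mem_preimage, Equiv.Perm.ofSubtype_apply_of_not_mem π (by simp [hjS, hjT])] at hj
    exact hjS hj

theorem exists_perms_subsingleton_setOf_apply_notMem [Infinite J] {A : Set J}
    (hA : #A = #J) (n : ℕ) :
    ∃ τ : Fin n → Equiv.Perm J, ∀ j, {q | τ q j ∉ A}.Subsingleton := by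
  -- `τ q` swaps `Aᶜ` with the `q`-th of `n` disjoint copies of `Aᶜ` inside `A`.
  have hcard : #(Fin n × ↥Aᶜ) ≤ #A := by
    rw [hA, Cardinal.mk_prod, Cardinal.lift_uzero, Cardinal.mk_fin, Cardinal.lift_natCast]
    exact Cardinal.mul_le_of_le (Cardinal.aleph0_le_mk J)
      (Cardinal.natCast_lt_aleph0.le.trans (Cardinal.aleph0_le_mk J)) (Cardinal.mk_set_le _)
  obtain ⟨ι⟩ := hcard
  have hperm (q : Fin n) : ∃ σ : Equiv.Perm J, σ ⁻¹' Aᶜ ⊆ range fun s => (ι (q, s) : J) := by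
    refine exists_perm_preimage_subset_of_disjoint ?_ (Equiv.ofInjective _ ?_)
    · exact disjoint_compl_left_iff_subset.2 (range_subset_iff.2 fun s => (ι (q, s)).2)
    · exact fun s t hst => congrArg Prod.snd (ι.injective (Subtype.ext hst))
  choose τ hτ using hperm
  refine ⟨τ, fun j p hp q hq => ?_⟩
  obtain ⟨s, hs⟩ := hτ p hp
  obtain ⟨t, ht⟩ := hτ q hq
  exact congrArg Prod.fst (ι.injective (Subtype.ext (hs.trans ht.symm)))

theorem exists_mk_setOf_abs_sub_le_eq [Infinite J] {f : J → ℝ} {M : ℝ}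
    (hf : ∀ j, |f j| ≤ M) {δ : ℝ} (hδ : 0 < δ) : ∃ c, #{j | |f j - c| ≤ δ} = #J := by
  let k : J → ℤ := fun j => ⌊f j / δ⌋
  have hk : (range k).Finite := by
    refine (finite_Icc ⌊-M / δ⌋ ⌊M / δ⌋).subset ?_
    rintro _ ⟨j, rfl⟩
    have := abs_le.1 (hf j)
    exact ⟨Int.floor_mono (by gcongr; linarith), Int.floor_mono (by gcongr; linarith)⟩
  have := hk.to_subtype
  -- `infinite_pigeonhole` wants domain and codomain in the same universe.
  obtain ⟨⟨⟨m, _⟩⟩, hm⟩ := Cardinal.infinite_pigeonhole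
    (fun j => ULift.up.{u} (rangeFactorization k j)) (Cardinal.aleph0_le_mk J)
    ((Cardinal.lt_aleph0_of_finite _).trans_le
      (Ordinal.aleph0_le_cof_iff.2 <| Ordinal.one_lt_cof_iff.2 <|
        Cardinal.isSuccLimit_ord (Cardinal.aleph0_le_mk J)))
  refine ⟨m * δ, le_antisymm (Cardinal.mk_set_le _) (hm ▸ Cardinal.mk_le_mk_of_subset ?_)⟩
  intro j hj
  have hkj : ⌊f j / δ⌋ = m := by simpa [rangeFactorization, k] using hj
  have h₁ := Int.floor_le (f j / δ)
  have h₂ := Int.lt_floor_add_one (f j / δ)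
  rw [hkj, le_div_iff₀ hδ] at h₁
  rw [hkj, div_lt_iff₀ hδ] at h₂
  show |f j - m * δ| ≤ δ
  rw [abs_le]
  constructor <;> nlinarith

theorem sum_le_card_mul_add_of_subsingleton {ι : Type*} [Fintype ι] {y : ι → ℝ} {B : Set ι}
    {δ D : ℝ} (hB : B.Subsingleton) (hδ : 0 ≤ δ) (hD : 0 ≤ D) (hgood : ∀ i ∉ B, y i ≤ δ)
    (hbad : ∀ i ∈ B, y i ≤ D) : ∑ i, y i ≤ Fintype.card ι * δ + D := by
  classical
  rcases hB.eq_empty_or_singleton with rfl | ⟨i₀, rfl⟩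
  · calc ∑ i, y i ≤ ∑ _i : ι, δ := Finset.sum_le_sum fun i _ => hgood i (notMem_empty i)
      _ ≤ Fintype.card ι * δ + D := by simp [hD]
  · have hrest : ∑ i ∈ Finset.univ.erase i₀, y i ≤ Fintype.card ι * δ :=
      calc ∑ i ∈ Finset.univ.erase i₀, y i ≤ (Finset.univ.erase i₀).card • δ :=
            Finset.sum_le_card_nsmul _ _ _ fun i hi => hgood i (Finset.ne_of_mem_erase hi)
        _ ≤ Fintype.card ι * δ := by
            rw [nsmul_eq_mul]; gcongr; exact_mod_cast Finset.card_erase_le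
    rw [← Finset.add_sum_erase _ _ (Finset.mem_univ i₀)]
    linarith [hbad i₀ rfl]

theorem exists_perms_average_near_const_of_infinite [Infinite J] {f : J → ℝ}
    {M : ℝ} (hf : ∀ j, |f j| ≤ M) {δ : ℝ} (hδ : 0 < δ) :
    ∃ n : ℕ, 0 < n ∧ ∃ τ : Fin n → Equiv.Perm J, ∃ c : ℝ,
      ∀ j, |(n : ℝ)⁻¹ * ∑ q, f (τ q j) - c| ≤ δ := by
  obtain ⟨c, hc⟩ := exists_mk_setOf_abs_sub_le_eq hf (half_pos hδ)
  have hD : 0 ≤ M + |c| := by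
    have := (abs_nonneg _).trans (hf (Classical.arbitrary J))
    positivity
  obtain ⟨n, hn⟩ := exists_nat_gt (2 * (M + |c|) / δ)
  have hn₀ : (0 : ℝ) < n := lt_of_le_of_lt (by positivity) hn
  obtain ⟨τ, hτ⟩ := exists_perms_subsingleton_setOf_apply_notMem hc n
  refine ⟨n, by exact_mod_cast hn₀, τ, c, fun j => ?_⟩
  have hsum : ∑ q, |f (τ q j) - c| ≤ n * (δ / 2) + (M + |c|) := by
    simpa using sum_le_card_mul_add_of_subsingleton (hτ j) (half_pos hδ).le hD
      (fun q hq => by simpa using hq) fun q _ => (abs_sub _ _).trans (by linarith [hf (τ q j)])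
  have hcentre : (n : ℝ)⁻¹ * ∑ q, f (τ q j) - c = (n : ℝ)⁻¹ * ∑ q, (f (τ q j) - c) := by
    rw [Finset.sum_sub_distrib, mul_sub]
    simp [hn₀.ne']
  have hsmall : (n : ℝ)⁻¹ * (M + |c|) ≤ δ / 2 := by
    rw [div_lt_iff₀ hδ] at hn
    rw [inv_mul_le_iff₀ hn₀]
    linarith
  calc |(n : ℝ)⁻¹ * ∑ q, f (τ q j) - c| = (n : ℝ)⁻¹ * |∑ q, (f (τ q j) - c)| := by
        rw [hcentre, abs_mul, abs_of_pos (inv_pos.2 hn₀)]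
    _ ≤ (n : ℝ)⁻¹ * (n * (δ / 2) + (M + |c|)) := by
        gcongr; exact (Finset.abs_sum_le_sum_abs _ _).trans hsum
    _ ≤ δ := by
        rw [mul_add, inv_mul_cancel_left₀ hn₀.ne']
        linarith

theorem Equiv.Perm.sum_apply_eq_sum_apply {β : Type*} [Fintype J] [DecidableEq J]
    [AddCommMonoid β] (f : J → β) (i j : J) :
    ∑ σ : Equiv.Perm J, f (σ i) = ∑ σ : Equiv.Perm J, f (σ j) :=
  Fintype.sum_equiv (Equiv.mulRight (Equiv.swap i j)) _ _ fun σ => by simp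

theorem exists_perms_average_eq_const_of_finite [Finite J] [Nonempty J] (f : J → ℝ) :
    ∃ n : ℕ, 0 < n ∧ ∃ τ : Fin n → Equiv.Perm J, ∃ c : ℝ,
      ∀ j, (n : ℝ)⁻¹ * ∑ q, f (τ q j) = c := by
  classical
  have := Fintype.ofFinite J
  let e := (Fintype.equivFin (Equiv.Perm J)).symm
  refine ⟨_, Fintype.card_pos, e, (Fintype.card (Equiv.Perm J) : ℝ)⁻¹ *
    ∑ σ : Equiv.Perm J, f (σ (Classical.arbitrary J)), fun j => ?_⟩
  rw [e.sum_comp (fun σ => f (σ j)), Equiv.Perm.sum_apply_eq_sum_apply f j]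

theorem exists_perms_average_near_const {f : J → ℝ} {M : ℝ}
    (hf : ∀ j, |f j| ≤ M) {δ : ℝ} (hδ : 0 < δ) :
    ∃ n : ℕ, 0 < n ∧ ∃ τ : Fin n → Equiv.Perm J, ∃ c : ℝ,
      ∀ j, |(n : ℝ)⁻¹ * ∑ q, f (τ q j) - c| ≤ δ := by
  rcases isEmpty_or_nonempty J with hJ | hJ
  · exact ⟨1, one_pos, 1, 0, isEmptyElim⟩
  rcases finite_or_infinite J with hJ | hJ
  · obtain ⟨n, hn, τ, c, hc⟩ := exists_perms_average_eq_const_of_finite f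
    exact ⟨n, hn, τ, c, fun j => by simp [hc j, hδ.le]⟩
  · exact exists_perms_average_near_const_of_infinite hf hδ

end

theorem Convex.setOf_ball_subset {E : Type*} [SeminormedAddCommGroup E] [NormedSpace ℝ E]
    {s : Set E} (hs : Convex ℝ s) (r : ℝ) : Convex ℝ {x | ball x r ⊆ s} := by
  intro x hx y hy a b ha hb hab z hz
  set d := z - (a • x + b • y)
  have hd : ‖d‖ < r := by rwa [mem_ball, dist_eq_norm] at hz
  have hxd : x + d ∈ ball x r := by simpa [mem_ball, dist_eq_norm] using hd
  have hyd : y + d ∈ ball y r := by simpa [mem_ball, dist_eq_norm] using hd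
  convert hs (hx hxd) (hy hyd) ha hb hab using 1
  rw [smul_add, smul_add, add_add_add_comm, ← add_smul, hab, one_smul]
  simp [d]

namespace lp

variable {J E : Type*} [NormedAddCommGroup E]

theorem memℓp_infty_comp {K : Type*} {f : J → E} (hf : Memℓp f ∞) (g : K → J) :
    Memℓp (f ∘ g) ∞ :=
  memℓp_infty ((memℓp_infty_iff.1 hf).mono (range_comp_subset_range g fun j => ‖f j‖))

noncomputable def compPerm (σ : Equiv.Perm J) : ℓ^∞(J, E) ≃ᵢ ℓ^∞(J, E) where
  toFun f := ⟨f ∘ σ, memℓp_infty_comp (lp.memℓp f) σ⟩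
  invFun f := ⟨f ∘ σ.symm, memℓp_infty_comp (lp.memℓp f) σ.symm⟩
  left_inv f := by ext; simp
  right_inv f := by ext; simp
  isometry_toFun := Isometry.of_dist_eq fun f g => by
    simp only [dist_eq_norm, lp.norm_eq_ciSup]
    exact σ.iSup_comp (g := fun j => ‖(f - g) j‖)

@[simp]
theorem compPerm_apply (σ : Equiv.Perm J) (f : ℓ^∞(J, E)) (j : J) : compPerm σ f j = f (σ j) :=
  rfl

theorem ball_compPerm_subset {Ω : Set ℓ^∞(J, E)} (hΩ : ∀ σ, ∀ f ∈ Ω, compPerm σ f ∈ Ω)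
    {f : ℓ^∞(J, E)} {ε : ℝ} (hf : ball f ε ⊆ Ω) (σ : Equiv.Perm J) :
    ball (compPerm σ f) ε ⊆ Ω := by
  rw [← (compPerm σ).image_ball]
  rintro _ ⟨g, hg, rfl⟩
  exact hΩ σ g (hf hg)

theorem exists_mem_convexHull_compPerm_dist_smul_one_le (f : ℓ^∞(J, ℝ)) {δ : ℝ} (hδ : 0 < δ) :
    ∃ g ∈ convexHull ℝ (range fun σ => compPerm σ f), ∃ c : ℝ, dist g (c • 1) ≤ δ := by
  obtain ⟨n, hn, τ, c, hc⟩ := exists_perms_average_near_const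
    (fun j => by simpa using lp.norm_apply_le_norm ENNReal.top_ne_zero f j) hδ
  refine ⟨∑ q, (n : ℝ)⁻¹ • compPerm (τ q) f, ?_, c, ?_⟩
  · refine (convex_convexHull ℝ _).sum_mem (fun _ _ => by positivity) ?_
      fun q _ => subset_convexHull ℝ _ ⟨τ q, rfl⟩
    simp [hn.ne']
  · rw [dist_eq_norm]
    refine lp.norm_le_of_forall_le hδ.le fun j => ?_
    rw [lp.coeFn_sub, Pi.sub_apply, lp.coeFn_sum, Finset.sum_apply, lp.coeFn_smul, Pi.smul_apply,
      lp.infty_coeFn_one]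
    simpa [Finset.mul_sum] using hc j

end lp

/-- Every nonempty open convex cone in `ℓ^∞(J)` that is invariant under the natural
action of the full permutation group of `J` contains a constant function. -/
theorem perm_invariant_open_cone_contains_constant
    {J : Type*} :
    letI : Fact ((1 : ℝ≥0∞) ≤ ⊤) := ⟨le_top⟩
    ∀ Ω : Set (lp (fun _ : J => ℝ) ⊤),
      Ω.Nonempty → IsOpen Ω → Convex ℝ Ω →
      (∀ t : ℝ, 0 < t → ∀ f ∈ Ω, t • f ∈ Ω) →
      (∀ σ : Equiv.Perm J, ∀ f ∈ Ω, ∀ g : lp (fun _ : J => ℝ) ⊤,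
        (∀ j : J, g j = f (σ j)) → g ∈ Ω) →
      ∃ c : ℝ, ∃ f ∈ Ω, ∀ j : J, f j = c := by
  intro Ω ⟨f, hf⟩ hopen hconv _ hinv
  obtain ⟨ε, hε, hball⟩ := Metric.isOpen_iff.mp hopen f hf
  obtain ⟨g, hg, c, hgc⟩ := lp.exists_mem_convexHull_compPerm_dist_smul_one_le f (half_pos hε)
  have hhull : convexHull ℝ (range fun σ => lp.compPerm σ f) ⊆ {x | ball x ε ⊆ Ω} :=
    convexHull_min (range_subset_iff.2 <|
        lp.ball_compPerm_subset (fun σ f hf => hinv σ f hf _ fun _ => rfl) hball)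
      (hconv.setOf_ball_subset ε)
  exact ⟨c, c • 1, hhull hg (by rw [mem_ball, dist_comm]; linarith), fun j => by simp⟩
end

section
/- Let J be a set and let ℝ^(J) denote the vector space of finitely supported functions J → ℝ. Let Ω ⊆ ℝ^(J) be a nonempty convex cone that is algebraically open (for every x ∈ Ω, the set Ω − x is absorbing), invariant under the group S_(J) of permutations of J moving only finitely many elements, and proper (Ω ≠ ℝ^(J)). Then the summation functional χ(x) = Σ_{j∈J} x_j satisfies: χ(x) ≥ 0 for all x ∈ Ω, or χ(x) ≤ 0 for all x ∈ Ω. -/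
open Finsupp

/-- If `c ∈ Ω` has zero coordinate sum, then averaging over the cyclic permutations of
its support shows `0 ∈ Ω`. -/
theorem aux_zero_mem
    {J : Type*} (Ω : Set (J →₀ ℝ))
    (hconv : Convex ℝ Ω)
    (hinv : ∀ σ : Equiv.Perm J, {j : J | σ j ≠ j}.Finite →
      ∀ x ∈ Ω, Finsupp.equivMapDomain σ x ∈ Ω)
    (c : J →₀ ℝ) (hc : c ∈ Ω) (hsum : (c.sum fun _ v => v) = 0) :
    (0 : J →₀ ℝ) ∈ Ω := by
  classical
  set S := c.support with hS
  rcases eq_or_ne S ∅ with h0 | hSne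
  · have : c = 0 := Finsupp.support_eq_empty.mp h0
    rwa [this] at hc
  set n := S.card with hn
  have hnpos : 0 < n := Finset.card_pos.mpr (Finset.nonempty_iff_ne_empty.mpr hSne)
  haveI : NeZero n := ⟨hnpos.ne'⟩
  set f : Fin n ≃ {j // j ∈ S} := S.equivFin.symm with hf
  -- the permutations
  set g : Fin n → Equiv.Perm J := fun k =>
    ((Equiv.addRight k).extendDomain f)⁻¹ with hg
  have hgfix : ∀ (k : Fin n) (j : J), j ∉ S → g k j = j := by
    intro k j hj
    have h1 : (Equiv.addRight k).extendDomain f j = j :=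
      Equiv.Perm.extendDomain_apply_not_subtype _ _ hj
    show ((Equiv.addRight k).extendDomain f)⁻¹ j = j
    exact Equiv.Perm.inv_eq_iff_eq.mpr h1.symm
  have hgfin : ∀ k : Fin n, {j : J | g k j ≠ j}.Finite := by
    intro k
    apply Set.Finite.subset S.finite_toSet
    intro j hj
    by_contra hjS
    exact hj (hgfix k j hjS)
  set x : Fin n → (J →₀ ℝ) := fun k => Finsupp.equivMapDomain (g k) c with hx
  have hxΩ : ∀ k, x k ∈ Ω := fun k => hinv (g k) (hgfin k) c hc
  -- the key computation: the sum of the x k is 0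
  have hsum0 : ∑ k : Fin n, x k = 0 := by
    ext j
    rw [Finsupp.finset_sum_apply]
    by_cases hj : j ∈ S
    · have hval : ∀ k : Fin n, x k j = c (f (f.symm ⟨j, hj⟩ + k)) := by
        intro k
        have hsymm : (g k).symm j = (Equiv.addRight k).extendDomain f j := by
          simp [hg]
        rw [hx, Finsupp.equivMapDomain_apply, hsymm,
          Equiv.Perm.extendDomain_apply_subtype _ _ hj]
        rfl
      simp only [hval]
      have hbij : Function.Bijective (fun k : Fin n => f.symm ⟨j, hj⟩ + k) :=
        (Equiv.addLeft (f.symm ⟨j, hj⟩)).bijective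
      rw [Fintype.sum_bijective _ hbij (fun k => c (f (f.symm ⟨j, hj⟩ + k)))
        (fun i => c (f i)) (fun k => rfl)]
      have : ∑ i : Fin n, c (f i) = ∑ s : {j // j ∈ S}, c s :=
        Equiv.sum_comp f fun s => c s
      rw [this]
      have : ∑ s : {j // j ∈ S}, c (s : J) = ∑ j ∈ S, c j := Finset.sum_coe_sort S (c ·)
      rw [this]
      simpa [Finsupp.sum, hS] using hsum
    · have hval : ∀ k : Fin n, x k j = 0 := by
        intro k
        have hsymm : (g k).symm j = j := by
          simp [hg, Equiv.Perm.extendDomain_apply_not_subtype _ _ hj]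
        rw [hx, Finsupp.equivMapDomain_apply, hsymm]
        exact Finsupp.notMem_support_iff.mp hj
      simp [hval]
  -- conclude by convexity
  have hmem : ∑ k : Fin n, (1 / (n : ℝ)) • x k ∈ Ω := by
    apply hconv.sum_mem
    · intro k _; positivity
    · rw [Finset.sum_const, Finset.card_univ, Fintype.card_fin, nsmul_eq_mul]
      field_simp
    · intro k _; exact hxΩ k
  have : ∑ k : Fin n, (1 / (n : ℝ)) • x k = 0 := by
    rw [← Finset.smul_sum, hsum0, smul_zero]
  rwa [this] at hmem

/-- For a nonempty proper algebraically open convex cone `Ω` in the space `ℝ^(J)` of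
finitely supported functions, invariant under the group of finitely supported
permutations of `J`, the summation functional `χ(x) = Σ_j x_j` is nonnegative on `Ω` or
nonpositive on `Ω`. -/
theorem summation_functional_semidefinite_on_invariant_cone
    {J : Type*} (Ω : Set (J →₀ ℝ)) (hne : Ω.Nonempty)
    (hconv : Convex ℝ Ω)
    (hcone : ∀ t : ℝ, 0 < t → ∀ x ∈ Ω, t • x ∈ Ω)
    (halgopen : ∀ x ∈ Ω, ∀ y : J →₀ ℝ, ∃ ε > (0 : ℝ),
      ∀ t : ℝ, 0 ≤ t → t ≤ ε → x + t • y ∈ Ω)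
    (hinv : ∀ σ : Equiv.Perm J, {j : J | σ j ≠ j}.Finite →
      ∀ x ∈ Ω, Finsupp.equivMapDomain σ x ∈ Ω)
    (hproper : Ω ≠ Set.univ) :
    (∀ x ∈ Ω, 0 ≤ x.sum fun _ v => v) ∨ (∀ x ∈ Ω, (x.sum fun _ v => v) ≤ 0) := by
  classical
  by_contra hcon
  push_neg at hcon
  obtain ⟨⟨a, haΩ, ha⟩, ⟨b, hbΩ, hb⟩⟩ := hcon
  -- χ as a linear map
  set χ : (J →₀ ℝ) →ₗ[ℝ] ℝ := Finsupp.lsum ℝ (fun _ => LinearMap.id) with hχ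
  have hχeq : ∀ x : J →₀ ℝ, χ x = x.sum fun _ v => v := fun x => rfl
  have hχa : χ a < 0 := by rw [hχeq]; exact ha
  have hχb : 0 < χ b := by rw [hχeq]; exact hb
  -- find c ∈ Ω with χ c = 0
  have hden : 0 < χ b - χ a := by linarith
  set t : ℝ := χ b / (χ b - χ a) with ht
  have ht0 : 0 ≤ t := le_of_lt (div_pos hχb hden)
  have ht1 : 0 ≤ 1 - t := by
    have : t ≤ 1 := by
      rw [ht, div_le_one hden]; linarith
    linarith
  set c : J →₀ ℝ := t • a + (1 - t) • b with hc
  have hcΩ : c ∈ Ω := hconv haΩ hbΩ ht0 ht1 (by ring)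
  have hχc : χ c = 0 := by
    rw [hc, map_add, map_smul, map_smul, smul_eq_mul, smul_eq_mul, ht]
    field_simp
    ring
  -- 0 ∈ Ω
  have h0 : (0 : J →₀ ℝ) ∈ Ω := by
    apply aux_zero_mem Ω hconv hinv c hcΩ
    rw [← hχeq]; exact hχc
  -- hence Ω = univ
  apply hproper
  ext y
  simp only [Set.mem_univ, iff_true]
  obtain ⟨ε, hε, hmem⟩ := halgopen 0 h0 y
  have h1 : (0 : J →₀ ℝ) + ε • y ∈ Ω := hmem ε (le_of_lt hε) le_rfl
  have h2 : (ε⁻¹ : ℝ) • ((0 : J →₀ ℝ) + ε • y) ∈ Ω :=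
    hcone _ (inv_pos.mpr hε) _ h1
  have : (ε⁻¹ : ℝ) • ((0 : J →₀ ℝ) + ε • y) = y := by
    rw [zero_add, smul_smul, inv_mul_cancel₀ (ne_of_gt hε), one_smul]
  rwa [this] at h2
end

section
/- Let J be a set and ℝ^(J) the space of finitely supported functions J → ℝ. Let Ω ⊆ ℝ^(J) be a nonempty convex cone that is algebraically open (for every x ∈ Ω, the set Ω − x is absorbing) and invariant under the group S_(J) of permutations of J moving only finitely many elements. Then every linear functional λ : ℝ^(J) → ℝ with λ(x) ≥ 0 for all x ∈ Ω is bounded in the sense that sup_{j∈J} |λ(e_j)| < ∞, where e_j is the function with value 1 at j and 0 elsewhere. (In other words, Ω^⋆ ⊆ ℓ∞(J,ℝ).) -/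
/-- Every linear functional that is nonnegative on a nonempty algebraically open convex
cone in `ℝ^(J)` which is invariant under finitely supported permutations is bounded on
the canonical basis vectors: `Ω^⋆ ⊆ ℓ^∞(J,ℝ)`. -/
theorem dual_of_invariant_open_cone_is_bounded
    {J : Type*} (Ω : Set (J →₀ ℝ)) (hne : Ω.Nonempty)
    (hconv : Convex ℝ Ω)
    (hcone : ∀ t : ℝ, 0 < t → ∀ x ∈ Ω, t • x ∈ Ω)
    (halgopen : ∀ x ∈ Ω, ∀ y : J →₀ ℝ, ∃ ε > (0 : ℝ),
      ∀ t : ℝ, 0 ≤ t → t ≤ ε → x + t • y ∈ Ω)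
    (hinv : ∀ σ : Equiv.Perm J, {j : J | σ j ≠ j}.Finite →
      ∀ x ∈ Ω, Finsupp.equivMapDomain σ x ∈ Ω)
    (lam : (J →₀ ℝ) →ₗ[ℝ] ℝ) (hlam : ∀ x ∈ Ω, 0 ≤ lam x) :
    ∃ M : ℝ, ∀ j : J, |lam (Finsupp.single j 1)| ≤ M := by
  classical
  obtain ⟨x₀, hx₀⟩ := hne
  by_cases hex : ∃ j₀ : J, x₀ j₀ = 0
  · obtain ⟨j₀, hj₀⟩ := hex
    obtain ⟨ε₁, hε₁, h₁⟩ := halgopen x₀ hx₀ (Finsupp.single j₀ 1)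
    obtain ⟨ε₂, hε₂, h₂⟩ := halgopen x₀ hx₀ (-(Finsupp.single j₀ 1))
    set ε : ℝ := min ε₁ ε₂ with hεdef
    have hε : 0 < ε := lt_min hε₁ hε₂
    have hplus : x₀ + Finsupp.single j₀ ε ∈ Ω := by
      have := h₁ ε hε.le (min_le_left _ _)
      rwa [Finsupp.smul_single', mul_one] at this
    have hminus : x₀ - Finsupp.single j₀ ε ∈ Ω := by
      have := h₂ ε hε.le (min_le_right _ _)
      rwa [smul_neg, Finsupp.smul_single', mul_one, ← sub_eq_add_neg] at this
    -- transport to any j with x₀ j = 0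
    have key : ∀ j : J, x₀ j = 0 →
        x₀ + Finsupp.single j ε ∈ Ω ∧ x₀ - Finsupp.single j ε ∈ Ω := by
      intro j hj
      by_cases hjj : j = j₀
      · subst hjj; exact ⟨hplus, hminus⟩
      · set σ : Equiv.Perm J := Equiv.swap j₀ j with hσdef
        have hfin : {k : J | σ k ≠ k}.Finite := by
          apply Set.Finite.subset (Set.Finite.insert j₀ (Set.finite_singleton j))
          intro k hk
          by_contra hkc
          simp only [Set.mem_insert_iff, Set.mem_singleton_iff, not_or] at hkc
          exact hk (Equiv.swap_apply_of_ne_of_ne hkc.1 hkc.2)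
        have hmapx : Finsupp.equivMapDomain σ x₀ = x₀ := by
          ext k
          rw [Finsupp.equivMapDomain_apply]
          rcases eq_or_ne k j₀ with rfl | hk0
          · simp [hσdef, Equiv.symm_swap, Equiv.swap_apply_left, hj, hj₀]
          · rcases eq_or_ne k j with rfl | hkj
            · simp [hσdef, Equiv.symm_swap, Equiv.swap_apply_right, hj, hj₀]
            · simp [hσdef, Equiv.symm_swap, Equiv.swap_apply_of_ne_of_ne hk0 hkj]
        have hmaps : Finsupp.equivMapDomain σ (Finsupp.single j₀ ε)
            = Finsupp.single j ε := by
          rw [Finsupp.equivMapDomain_single, hσdef, Equiv.swap_apply_left]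
        have hadd : ∀ u v : J →₀ ℝ, Finsupp.equivMapDomain σ (u + v)
            = Finsupp.equivMapDomain σ u + Finsupp.equivMapDomain σ v := by
          intro u v; ext k
          simp [Finsupp.equivMapDomain_apply]
        have hsub : ∀ u v : J →₀ ℝ, Finsupp.equivMapDomain σ (u - v)
            = Finsupp.equivMapDomain σ u - Finsupp.equivMapDomain σ v := by
          intro u v; ext k
          simp [Finsupp.equivMapDomain_apply]
        constructor
        · have := hinv σ hfin _ hplus
          rwa [hadd, hmapx, hmaps] at this
        · have := hinv σ hfin _ hminus
          rwa [hsub, hmapx, hmaps] at this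
    have bound0 : ∀ j : J, x₀ j = 0 → |lam (Finsupp.single j 1)| ≤ lam x₀ / ε := by
      intro j hj
      obtain ⟨hp, hm⟩ := key j hj
      have hsing : (Finsupp.single j ε : J →₀ ℝ) = ε • Finsupp.single j (1:ℝ) := by
        rw [Finsupp.smul_single', mul_one]
      have e1 : lam (x₀ + Finsupp.single j ε) = lam x₀ + ε * lam (Finsupp.single j 1) := by
        rw [map_add, hsing, map_smul, smul_eq_mul]
      have e2 : lam (x₀ - Finsupp.single j ε) = lam x₀ - ε * lam (Finsupp.single j 1) := by
        rw [map_sub, hsing, map_smul, smul_eq_mul]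
      have hp' : 0 ≤ lam x₀ + ε * lam (Finsupp.single j 1) := e1 ▸ hlam _ hp
      have hm' : 0 ≤ lam x₀ - ε * lam (Finsupp.single j 1) := e2 ▸ hlam _ hm
      rw [le_div_iff₀ hε]
      have : |lam (Finsupp.single j 1)| * ε = |ε * lam (Finsupp.single j 1)| := by
        rw [abs_mul, abs_of_pos hε, mul_comm]
      rw [this, abs_le]
      constructor <;> linarith
    refine ⟨lam x₀ / ε + ∑ j ∈ x₀.support, |lam (Finsupp.single j 1)|, fun j => ?_⟩
    have hsum_nonneg : 0 ≤ ∑ j ∈ x₀.support, |lam (Finsupp.single j 1)| :=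
      Finset.sum_nonneg fun _ _ => abs_nonneg _
    have hdiv_nonneg : 0 ≤ lam x₀ / ε := div_nonneg (hlam _ hx₀) hε.le
    by_cases hj : x₀ j = 0
    · linarith [bound0 j hj]
    · have hmem : j ∈ x₀.support := Finsupp.mem_support_iff.mpr hj
      have := Finset.single_le_sum (f := fun j => |lam (Finsupp.single j 1)|)
        (fun _ _ => abs_nonneg _) hmem
      linarith
  · -- every coordinate of x₀ is nonzero: J is "covered" by the finite support
    push_neg at hex
    refine ⟨∑ j ∈ x₀.support, |lam (Finsupp.single j 1)|, fun j => ?_⟩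
    have hmem : j ∈ x₀.support := Finsupp.mem_support_iff.mpr (hex j)
    exact Finset.single_le_sum (f := fun j => |lam (Finsupp.single j 1)|)
      (fun _ _ => abs_nonneg _) hmem
end

section
/- Let J be an infinite set and let 1 < p < ∞. Let W be a nonempty open convex cone in the real Banach space ℓ^p(J,ℝ) such that for every permutation σ of J moving only finitely many elements, the induced isometry f ↦ f ∘ σ maps W into W. Then W = ℓ^p(J,ℝ). -/
open scoped ENNReal Topology
open Metric Set Filter

/-!
If `w` is finitely supported and `ball w r ⊆ W`, a finitely supported permutation `σ` moves the
support of `w` off itself. Invariance gives `ball (w ∘ σ) r ⊆ W`, and convexity then gives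
`ball v r ⊆ W` for the average `v` of `w` and `w ∘ σ`. Disjointness of supports makes
`‖v‖ = 2 ^ (1/p - 1) ‖w‖`, a contraction because `p > 1`. Iterating from a finitely supported
approximation of a point of `W`, we get balls of a fixed radius in `W` whose centres tend
to `0`, so `0 ∈ W`, and an open cone containing `0` is the whole space.
-/

theorem eq_univ_of_isOpen_of_zero_mem_of_smul_mem {E : Type*} [AddCommGroup E] [Module ℝ E]
    [TopologicalSpace E] [ContinuousSMul ℝ E] {W : Set E} (hW : IsOpen W) (h0 : (0 : E) ∈ W)
    (hcone : ∀ t : ℝ, 0 < t → ∀ x ∈ W, t • x ∈ W) : W = univ := by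
  refine eq_univ_of_forall fun x => ?_
  have hsmall : ∀ᶠ t : ℝ in 𝓝[>] 0, t • x ∈ W :=
    (((continuous_id.smul continuous_const).tendsto' 0 0 (zero_smul ℝ x)).mono_left
      nhdsWithin_le_nhds).eventually (hW.mem_nhds h0)
  obtain ⟨t, htx, ht⟩ := (hsmall.and self_mem_nhdsWithin).exists
  simpa [smul_smul, inv_mul_cancel₀ (ne_of_gt ht)] using hcone t⁻¹ (inv_pos.2 ht) _ htx

theorem Convex.ball_combo_subset {E : Type*} [SeminormedAddCommGroup E] [Module ℝ E]
    {W : Set E} (hW : Convex ℝ W) {x y : E} {r : ℝ} (hx : ball x r ⊆ W) (hy : ball y r ⊆ W)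
    {a b : ℝ} (ha : 0 ≤ a) (hb : 0 ≤ b) (hab : a + b = 1) : ball (a • x + b • y) r ⊆ W := by
  intro z hz
  set d := z - (a • x + b • y)
  have hd : ‖d‖ < r := mem_ball_iff_norm.1 hz
  have hz : z = a • (x + d) + b • (y + d) := by
    obtain rfl : b = 1 - a := by linarith
    simp only [d]
    module
  rw [hz]
  exact hW (hx (by simpa using hd)) (hy (by simpa using hd)) ha hb hab

theorem exists_mem_norm_lt_of_forall_exists_norm_le {E : Type*} [SeminormedAddCommGroup E]
    {C : Set E} {c : ℝ} (hc0 : 0 ≤ c) (hc1 : c < 1) (hC : C.Nonempty)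
    (hstep : ∀ x ∈ C, ∃ y ∈ C, ‖y‖ ≤ c * ‖x‖) {δ : ℝ} (hδ : 0 < δ) : ∃ x ∈ C, ‖x‖ < δ := by
  obtain ⟨x₀, hx₀⟩ := hC
  have hiter : ∀ n : ℕ, ∃ x ∈ C, ‖x‖ ≤ c ^ n * ‖x₀‖ := by
    intro n
    induction n with
    | zero => exact ⟨x₀, hx₀, by simp⟩
    | succ n ih =>
      obtain ⟨x, hx, hxn⟩ := ih
      obtain ⟨y, hy, hyx⟩ := hstep x hx
      exact ⟨y, hy, hyx.trans (by rw [pow_succ']; nlinarith)⟩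
  have hlim : Tendsto (fun n : ℕ => c ^ n * ‖x₀‖) atTop (𝓝 0) := by
    simpa using (tendsto_pow_atTop_nhds_zero_of_lt_one hc0 hc1).mul_const ‖x₀‖
  obtain ⟨n, hn⟩ := (hlim.eventually (gt_mem_nhds hδ)).exists
  obtain ⟨x, hx, hxn⟩ := hiter n
  exact ⟨x, hx, hxn.trans_lt hn⟩

theorem Equiv.Perm.exists_finite_support_forall_mem_not_mem {J : Type*} [Infinite J]
    (A : Finset J) : ∃ σ : Equiv.Perm J, {j | σ j ≠ j}.Finite ∧ ∀ j ∈ A, σ j ∉ A := by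
  classical
  obtain ⟨S, hAS, hS⟩ := Infinite.exists_superset_card_eq A (2 * A.card) (by omega)
  have hcard : Fintype.card {x : S // x.1 ∈ A} = Fintype.card {x : S // x.1 ∉ A} := by
    rw [Fintype.card_subtype_compl, Fintype.card_coe, hS,
      Fintype.card_congr (Equiv.subtypeSubtypeEquivSubtype fun hj => hAS hj), Fintype.card_coe]
    omega
  let e := Fintype.equivOfCardEq hcard
  refine ⟨Equiv.Perm.ofSubtype e.extendSubtype, S.finite_toSet.subset fun j hj => ?_,
    fun j hj => ?_⟩
  · by_contra hjS
    exact hj (Equiv.Perm.ofSubtype_apply_of_not_mem _ hjS)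
  · rw [Equiv.Perm.ofSubtype_apply_of_mem _ (hAS hj)]
    exact e.extendSubtype_mem _ hj

section lp

variable {ι : Type*} {p : ℝ≥0∞}

theorem Memℓp.comp_perm {E : Type*} [NormedAddCommGroup E] {f : ι → E} (hf : Memℓp f p)
    (hp : 0 < p.toReal) (σ : Equiv.Perm ι) : Memℓp (f ∘ σ) p :=
  memℓp_gen <| (σ.summable_iff (f := fun i => ‖f i‖ ^ p.toReal)).2 (hf.summable hp)

variable [Fact (1 ≤ p)]

noncomputable def lp.permute (𝕜 : Type*) {E : Type*} [NormedField 𝕜] [NormedAddCommGroup E]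
    [NormedSpace 𝕜 E] (hp : 0 < p.toReal) (σ : Equiv.Perm ι) :
    lp (fun _ : ι => E) p ≃ₗᵢ[𝕜] lp (fun _ : ι => E) p where
  toFun f := ⟨f ∘ σ, (lp.memℓp f).comp_perm hp σ⟩
  invFun f := ⟨f ∘ σ.symm, (lp.memℓp f).comp_perm hp σ.symm⟩
  map_add' _ _ := rfl
  map_smul' _ _ := rfl
  left_inv f := by ext; simp
  right_inv f := by ext; simp
  norm_map' f := by
    simp only [lp.norm_eq_tsum_rpow hp]
    exact congrArg (· ^ (1 / p.toReal)) (σ.tsum_eq fun i => ‖f i‖ ^ p.toReal)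

omit [Fact (1 ≤ p)] in
theorem lp.norm_add_rpow_of_disjoint {E : ι → Type*} [∀ i, NormedAddCommGroup (E i)]
    (hp : 0 < p.toReal) {f g : lp E p} (h : ∀ i, f i = 0 ∨ g i = 0) :
    ‖f + g‖ ^ p.toReal = ‖f‖ ^ p.toReal + ‖g‖ ^ p.toReal := by
  rw [lp.norm_rpow_eq_tsum hp, lp.norm_rpow_eq_tsum hp, lp.norm_rpow_eq_tsum hp,
    ← ((lp.memℓp f).summable hp).tsum_add ((lp.memℓp g).summable hp)]
  congr 1 with i
  rcases h i with h0 | h0 <;> simp [h0, Real.zero_rpow hp.ne']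

theorem lp.exists_finite_support_dist_lt {E : Type*} [NormedAddCommGroup E] (hp : p ≠ ⊤)
    (f : lp (fun _ : ι => E) p) {ε : ℝ} (hε : 0 < ε) :
    ∃ g : lp (fun _ : ι => E) p, (Function.support g).Finite ∧ dist f g < ε := by
  classical
  obtain ⟨A, hA⟩ := (Metric.tendsto_atTop.1 (lp.hasSum_single hp f)) ε hε
  refine ⟨∑ i ∈ A, lp.single p i (f i), A.finite_toSet.subset fun j hj => ?_, ?_⟩
  · by_contra hjA
    refine hj ?_
    rw [lp.coeFn_sum, Finset.sum_apply]
    exact Finset.sum_eq_zero fun i hi => by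
      rw [lp.single_apply, Pi.single_eq_of_ne (ne_of_mem_of_not_mem hi hjA).symm]
  · rw [dist_comm]; exact hA A le_rfl

end lp

theorem lp.exists_finite_support_ball_subset_norm_eq {J : Type*} [Infinite J] {p : ℝ≥0∞}
    [Fact (1 ≤ p)] (hp : 0 < p.toReal) {W : Set (lp (fun _ : J => ℝ) p)} (hconv : Convex ℝ W)
    (hperm : ∀ σ : Equiv.Perm J, {j | σ j ≠ j}.Finite → MapsTo (lp.permute ℝ (E := ℝ) hp σ) W W)
    {w : lp (fun _ : J => ℝ) p} (hw : (Function.support w).Finite) {r : ℝ}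
    (hball : ball w r ⊆ W) :
    ∃ v : lp (fun _ : J => ℝ) p, (Function.support v).Finite ∧ ball v r ⊆ W ∧
      ‖v‖ = 2 ^ p.toReal⁻¹ / 2 * ‖w‖ := by
  obtain ⟨σ, hσ, hσw⟩ := Equiv.Perm.exists_finite_support_forall_mem_not_mem hw.toFinset
  set T := lp.permute ℝ (E := ℝ) hp σ
  have hdisj : ∀ j, w j = 0 ∨ T w j = 0 := fun j =>
    or_iff_not_imp_left.2 fun hj => (by simpa using hσw j (hw.mem_toFinset.2 hj) : w (σ j) = 0)
  have hTball : ball (T w) r ⊆ W := by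
    rw [← T.coe_toIsometryEquiv, ← T.toIsometryEquiv.image_ball]
    exact (image_mono hball).trans (hperm σ hσ).image_subset
  have hnorm : ‖w + T w‖ = 2 ^ p.toReal⁻¹ * ‖w‖ := by
    rw [← Real.rpow_left_inj (norm_nonneg _) (by positivity) hp.ne',
      lp.norm_add_rpow_of_disjoint hp hdisj, T.norm_map,
      Real.mul_rpow (by positivity) (norm_nonneg _), Real.rpow_inv_rpow (by norm_num) hp.ne']
    ring
  refine ⟨(2⁻¹ : ℝ) • (w + T w), ?_, ?_, ?_⟩
  · refine (hw.union (hw.preimage σ.injective.injOn)).subset fun j hj => ?_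
    by_contra hj'
    simp only [mem_union, mem_preimage, Function.mem_support, not_or, not_not] at hj'
    have hTj : T w j = 0 := hj'.2
    refine hj ?_
    rw [lp.coeFn_smul, lp.coeFn_add, Pi.smul_apply, Pi.add_apply, hj'.1, hTj, add_zero,
      smul_zero]
  · simpa only [smul_add] using hconv.ball_combo_subset hball hTball (by norm_num)
      (by norm_num) (by norm_num)
  · rw [norm_smul, hnorm]
    simp only [norm_inv, Real.norm_ofNat]
    ring

/-- For an infinite set `J` and `1 < p < ∞`, every nonempty open convex cone in
`ℓ^p(J,ℝ)` invariant under all finitely supported permutations of `J` is the whole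
space. -/
theorem invariant_open_cone_in_lp_is_univ
    {J : Type*} [Infinite J] (p : ℝ≥0∞) (hp1 : 1 < p) (hp2 : p < ⊤) :
    letI : Fact ((1 : ℝ≥0∞) ≤ p) := ⟨hp1.le⟩
    ∀ W : Set (lp (fun _ : J => ℝ) p),
      W.Nonempty → IsOpen W → Convex ℝ W →
      (∀ t : ℝ, 0 < t → ∀ f ∈ W, t • f ∈ W) →
      (∀ σ : Equiv.Perm J, {j : J | σ j ≠ j}.Finite →
        ∀ f ∈ W, ∀ g : lp (fun _ : J => ℝ) p, (∀ j : J, g j = f (σ j)) → g ∈ W) →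
      W = Set.univ := by
  have : Fact (1 ≤ p) := ⟨hp1.le⟩
  intro W ⟨f, hf⟩ hopen hconv hcone hperm
  have hp : 1 < p.toReal := by
    simpa using (ENNReal.toReal_lt_toReal ENNReal.one_ne_top hp2.ne).2 hp1
  have hp0 : 0 < p.toReal := zero_lt_one.trans hp
  have hmaps (σ : Equiv.Perm J) (hσ : {j | σ j ≠ j}.Finite) :
      MapsTo (lp.permute ℝ hp0 σ) W W := fun f hf => hperm σ hσ f hf _ fun _ => rfl
  obtain ⟨r, hr, hfr⟩ := Metric.isOpen_iff.1 hopen f hf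
  obtain ⟨g, hg, hfg⟩ := lp.exists_finite_support_dist_lt hp2.ne f (half_pos hr)
  have hc : 2 ^ p.toReal⁻¹ / 2 < (1 : ℝ) := by
    rw [div_lt_one two_pos]
    simpa using Real.rpow_lt_rpow_of_exponent_lt one_lt_two (inv_lt_one_of_one_lt₀ hp)
  set C := {w : lp (fun _ : J => ℝ) p | (Function.support w).Finite ∧ ball w (r / 2) ⊆ W}
  have hgC : g ∈ C := ⟨hg, (ball_subset_ball' (by rw [dist_comm]; linarith)).trans hfr⟩
  have hstep : ∀ w ∈ C, ∃ v ∈ C, ‖v‖ ≤ 2 ^ p.toReal⁻¹ / 2 * ‖w‖ := fun w hw =>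
    let ⟨v, hv, hvr, hnorm⟩ :=
      lp.exists_finite_support_ball_subset_norm_eq hp0 hconv hmaps hw.1 hw.2
    ⟨v, ⟨hv, hvr⟩, hnorm.le⟩
  obtain ⟨w, ⟨-, hw⟩, hw0⟩ :=
    exists_mem_norm_lt_of_forall_exists_norm_le (by positivity) hc ⟨g, hgC⟩ hstep
      (half_pos hr)
  exact eq_univ_of_isOpen_of_zero_mem_of_smul_mem hopen (hw (by simpa using hw0)) hcone
end

section
/- Let 𝔤 be a Hilbert–Lie algebra: a real Hilbert space carrying a Lie algebra structure such that each ad(x) = [x, ·] is a bounded linear operator and ⟨[x,y], z⟩ = −⟨y, [x,z]⟩ for all x, y, z. Then 𝔤 contains a proper open invariant convex cone (a nonempty open convex cone Ω ≠ 𝔤 with exp(ad x)(Ω) ⊆ Ω for all x ∈ 𝔤) if and only if the center 𝔷(𝔤) = {z ∈ 𝔤 : [z,y] = 0 for all y} is nonzero. -/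
open scoped RealInnerProductSpace

attribute [local instance high] NormedAddCommGroup.toAddCommGroup

/-!
If `z` is central, the half-space `{x | 0 < ⟪z, x⟫}` is invariant, because each `exp (ad x)` is
orthogonal and fixes `z`. Conversely, Hahn–Banach yields a nonzero `z` in the dual cone `Ω*`, which
is again invariant. An interior point `p` of `Ω` gives `r * ‖w‖ ≤ ⟪p, w⟫` on `Ω*`, so the closed
convex hull `K` of the sphere of radius `‖z‖` in `Ω*` avoids `0`. Every `exp (t • ad x)` preserves
`K` and norms, hence fixes the unique point of minimal norm of `K`; differentiating in `t` shows
that this nonzero point is killed by every `ad x`, i.e. it is central.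
-/

open NormedSpace Set Function
open scoped Nat

section Banach

variable {E : Type*} [NormedAddCommGroup E] [NormedSpace ℝ E] [CompleteSpace E]
  {A : E →L[ℝ] E} {v : E}

theorem exp_apply_eq_self_of_apply_eq_zero (hv : A v = 0) : exp A v = v := by
  have hsum := expSeries_summable' (𝕂 := ℝ) A
  calc exp A v = ∑' n : ℕ, ((n ! : ℝ)⁻¹ • A ^ n) v := by
        rw [exp_eq_tsum ℝ]
        exact (ContinuousLinearMap.apply ℝ E v).map_tsum hsum
    _ = ((0 ! : ℝ)⁻¹ • A ^ 0) v := by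
        refine tsum_eq_single 0 fun n hn => ?_
        obtain ⟨m, rfl⟩ := Nat.exists_eq_succ_of_ne_zero hn
        simp [pow_succ, hv]
    _ = v := by simp

theorem apply_eq_zero_of_forall_exp_smul_apply_eq (hv : ∀ t : ℝ, exp (t • A) v = v) :
    A v = 0 := by
  have hderiv : HasDerivAt (fun t : ℝ => exp (t • A) v) (A v) 0 := by
    simpa using (hasDerivAt_exp_smul_const (𝕂 := ℝ) A 0).clm_apply (hasDerivAt_const 0 v)
  have hconst : HasDerivAt (fun t : ℝ => exp (t • A) v) 0 0 := by
    simpa only [hv] using hasDerivAt_const (0 : ℝ) v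
  exact hderiv.unique hconst

end Banach

theorem mapsTo_closedConvexHull {𝕜 E F : Type*} [Semiring 𝕜] [PartialOrder 𝕜] [AddCommGroup E]
    [Module 𝕜 E] [TopologicalSpace E] [AddCommGroup F] [Module 𝕜 F] [TopologicalSpace F]
    (T : E →L[𝕜] F) {s : Set E} {t : Set F} (hT : MapsTo T s t) :
    MapsTo T (closedConvexHull 𝕜 s) (closedConvexHull 𝕜 t) :=
  closedConvexHull_min (hT.mono_right subset_closedConvexHull)
    (convex_closedConvexHull.linear_preimage T.toLinearMap)
    (isClosed_closedConvexHull.preimage T.continuous)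

section Hilbert

variable {E : Type*} [NormedAddCommGroup E] [InnerProductSpace ℝ E] [CompleteSpace E]

theorem norm_exp_apply_of_mem_skewAdjoint {A : E →L[ℝ] E} (hA : A ∈ skewAdjoint (E →L[ℝ] E))
    (u : E) : ‖exp A u‖ = ‖u‖ :=
  letI : NormedAlgebra ℚ (E →L[ℝ] E) := .restrictScalars ℚ ℝ _
  Unitary.norm_map ⟨exp A, exp_mem_unitary_of_mem_skewAdjoint hA⟩ u

theorem inner_exp_apply_of_mem_skewAdjoint {A : E →L[ℝ] E} (hA : A ∈ skewAdjoint (E →L[ℝ] E))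
    (u v : E) : ⟪u, exp A v⟫ = ⟪exp (-A) u, v⟫ := by
  rw [← skewAdjoint.mem_iff.mp hA, ← star_exp, ContinuousLinearMap.star_eq_adjoint,
    ContinuousLinearMap.adjoint_inner_left]

theorem exists_mem_forall_isFixedPt_of_mapsTo {K : Set E} (hne : K.Nonempty) (hcl : IsClosed K)
    (hconv : Convex ℝ K) :
    ∃ v ∈ K, ∀ T : E → E, MapsTo T K K → ‖T v‖ ≤ ‖v‖ → IsFixedPt T v := by
  obtain ⟨v, hvK, hv⟩ := exists_norm_eq_iInf_of_complete_convex hne hcl.isComplete hconv 0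
  refine ⟨v, hvK, fun T hT hTv => ?_⟩
  have hinner := (norm_eq_iInf_iff_real_inner_le_zero hconv hvK).mp hv (T v) (hT hvK)
  rw [zero_sub, inner_neg_left, inner_sub_right, real_inner_self_eq_norm_sq] at hinner
  have hdist : ‖T v - v‖ ^ 2 ≤ 0 := by
    rw [norm_sub_sq_real, real_inner_comm]
    nlinarith [norm_nonneg (T v), norm_nonneg v]
  exact sub_eq_zero.mp (norm_eq_zero.mp (pow_eq_zero_iff two_ne_zero |>.mp
    (le_antisymm hdist (sq_nonneg _))))

theorem mul_norm_le_inner_of_mem_innerDual {s : Set E} {p w : E} {r : ℝ} (hr : 0 ≤ r)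
    (hball : Metric.closedBall p r ⊆ s) (hw : w ∈ ProperCone.innerDual s) :
    r * ‖w‖ ≤ ⟪p, w⟫ := by
  rcases eq_or_ne w 0 with rfl | hw0
  · simp
  have hnorm : 0 < ‖w‖ := norm_pos_iff.mpr hw0
  have hmem : p - (r / ‖w‖) • w ∈ s := hball <| by
    rw [Metric.mem_closedBall, dist_eq_norm, sub_sub_cancel_left, norm_neg, norm_smul,
      Real.norm_of_nonneg (by positivity), div_mul_cancel₀ r hnorm.ne']
  have hinner := ProperCone.mem_innerDual.mp hw hmem
  rw [inner_sub_left, real_inner_smul_left, real_inner_self_eq_norm_sq] at hinner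
  have hscale : r / ‖w‖ * ‖w‖ ^ 2 = r * ‖w‖ := by field_simp
  linarith

theorem exists_ne_zero_mem_innerDual_of_ne_univ {Ω : Set E} (hne : Ω.Nonempty)
    (hopen : IsOpen Ω) (hconv : Convex ℝ Ω) (hcone : ∀ t : ℝ, 0 < t → ∀ x ∈ Ω, t • x ∈ Ω)
    (hproper : Ω ≠ univ) : ∃ z ≠ 0, z ∈ ProperCone.innerDual Ω := by
  obtain ⟨q, hq⟩ := (ne_univ_iff_exists_notMem Ω).mp hproper
  obtain ⟨f, hf⟩ := geometric_hahn_banach_open_point hconv hopen hq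
  have hf_nonpos : ∀ a ∈ Ω, f a ≤ 0 := by
    intro a ha
    by_contra! hpos
    have hq_pos : 0 < f q := hpos.trans (hf a ha)
    have hscaled := hf _ (hcone (2 * f q / f a) (by positivity) a ha)
    rw [map_smul, smul_eq_mul, div_mul_cancel₀ _ hpos.ne'] at hscaled
    linarith
  refine ⟨(InnerProductSpace.toDual ℝ E).symm (-f), ?_, ProperCone.mem_innerDual.mpr fun x hx => ?_⟩
  · intro hzero
    obtain ⟨p, hp⟩ := hne
    have hf_zero : f = 0 := by simpa using hzero
    simpa [hf_zero] using hf p hp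
  · rw [real_inner_comm, InnerProductSpace.toDual_symm_apply]
    simpa using hf_nonpos x hx

theorem mapsTo_exp_innerDual_inter_sphere {A : E →L[ℝ] E} (hA : A ∈ skewAdjoint (E →L[ℝ] E))
    {Ω : Set E} (hΩ : (exp (-A) : E →L[ℝ] E) '' Ω ⊆ Ω) (ρ : ℝ) :
    MapsTo ⇑(exp A : E →L[ℝ] E) (ProperCone.innerDual Ω ∩ Metric.sphere 0 ρ)
      (ProperCone.innerDual Ω ∩ Metric.sphere 0 ρ) := by
  rintro w ⟨hwD, hwρ⟩
  refine ⟨ProperCone.mem_innerDual.mpr fun x hx => ?_, ?_⟩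
  · rw [inner_exp_apply_of_mem_skewAdjoint hA]
    exact ProperCone.mem_innerDual.mp hwD (hΩ (mem_image_of_mem _ hx))
  · simpa [norm_exp_apply_of_mem_skewAdjoint hA] using hwρ

theorem exists_ne_zero_forall_apply_eq_zero_of_invariant_cone {S : Set (E →L[ℝ] E)}
    (hS : S ⊆ skewAdjoint (E →L[ℝ] E)) (hS_smul : ∀ A ∈ S, ∀ t : ℝ, t • A ∈ S) {Ω : Set E}
    (hne : Ω.Nonempty) (hopen : IsOpen Ω) (hconv : Convex ℝ Ω)
    (hcone : ∀ t : ℝ, 0 < t → ∀ x ∈ Ω, t • x ∈ Ω) (hproper : Ω ≠ univ)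
    (hinv : ∀ A ∈ S, (exp A : E →L[ℝ] E) '' Ω ⊆ Ω) : ∃ v ≠ 0, ∀ A ∈ S, A v = 0 := by
  obtain ⟨z, hz, hzD⟩ := exists_ne_zero_mem_innerDual_of_ne_univ hne hopen hconv hcone hproper
  obtain ⟨p, hp⟩ := hne
  obtain ⟨r, hr, hball⟩ := Metric.nhds_basis_closedBall.mem_iff.mp (hopen.mem_nhds hp)
  set K := closedConvexHull ℝ ((ProperCone.innerDual Ω : Set E) ∩ Metric.sphere 0 ‖z‖)
  have hK : K ⊆ {w | r * ‖z‖ ≤ ⟪p, w⟫} := by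
    refine closedConvexHull_min ?_ (convex_halfSpace_ge (innerₗ E p).isLinear _)
      (isClosed_le continuous_const (continuous_const.inner continuous_id))
    rintro w ⟨hwD, hwz⟩
    rw [mem_ofPred_eq, ← mem_sphere_zero_iff_norm.mp hwz]
    exact mul_norm_le_inner_of_mem_innerDual hr.le hball hwD
  obtain ⟨v, hvK, hv⟩ := exists_mem_forall_isFixedPt_of_mapsTo (K := K)
    ⟨z, subset_closedConvexHull ⟨hzD, by simp⟩⟩ isClosed_closedConvexHull convex_closedConvexHull
  refine ⟨v, ?_, fun A hA => apply_eq_zero_of_forall_exp_smul_apply_eq fun t => ?_⟩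
  · rintro rfl
    have := hK hvK
    simp only [mem_ofPred_eq, inner_zero_right] at this
    exact (mul_pos hr (norm_pos_iff.mpr hz)).not_ge this
  · have htA := hS (hS_smul A hA t)
    have hinv' : (exp (-(t • A)) : E →L[ℝ] E) '' Ω ⊆ Ω := by
      rw [← neg_smul]
      exact hinv _ (hS_smul A hA (-t))
    exact hv _ (mapsTo_closedConvexHull _ (mapsTo_exp_innerDual_inter_sphere htA hinv' _))
      (norm_exp_apply_of_mem_skewAdjoint htA v).le

theorem exists_invariant_cone_of_apply_eq_zero {S : Set (E →L[ℝ] E)}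
    (hS : S ⊆ skewAdjoint (E →L[ℝ] E)) {v : E} (hv : v ≠ 0) (hSv : ∀ A ∈ S, A v = 0) :
    ∃ Ω : Set E, Ω.Nonempty ∧ IsOpen Ω ∧ Convex ℝ Ω ∧
      (∀ t : ℝ, 0 < t → ∀ x ∈ Ω, t • x ∈ Ω) ∧ Ω ≠ univ ∧
      ∀ A ∈ S, (exp A : E →L[ℝ] E) '' Ω ⊆ Ω := by
  refine ⟨{x | 0 < ⟪v, x⟫}, ⟨v, real_inner_self_pos.mpr hv⟩,
    isOpen_lt continuous_const (continuous_const.inner continuous_id),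
    convex_halfSpace_gt (innerₗ E v).isLinear 0,
    fun t ht x hx => by simpa [real_inner_smul_right] using mul_pos ht hx,
    (ne_univ_iff_exists_notMem _).mpr ⟨0, by simp⟩, ?_⟩
  rintro A hA _ ⟨w, hw, rfl⟩
  have hfix : exp (-A) v = v := exp_apply_eq_self_of_apply_eq_zero (by simp [hSv A hA])
  rwa [mem_ofPred_eq, inner_exp_apply_of_mem_skewAdjoint (hS hA), hfix]

theorem exists_invariant_cone_iff_exists_ne_zero_forall_apply_eq_zero {S : Set (E →L[ℝ] E)}
    (hS : S ⊆ skewAdjoint (E →L[ℝ] E)) (hS_smul : ∀ A ∈ S, ∀ t : ℝ, t • A ∈ S) :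
    (∃ Ω : Set E, Ω.Nonempty ∧ IsOpen Ω ∧ Convex ℝ Ω ∧
      (∀ t : ℝ, 0 < t → ∀ x ∈ Ω, t • x ∈ Ω) ∧ Ω ≠ univ ∧
      ∀ A ∈ S, (exp A : E →L[ℝ] E) '' Ω ⊆ Ω) ↔ ∃ v ≠ 0, ∀ A ∈ S, A v = 0 :=
  ⟨fun ⟨_, hne, hopen, hconv, hcone, hproper, hinv⟩ =>
    exists_ne_zero_forall_apply_eq_zero_of_invariant_cone hS hS_smul hne hopen hconv hcone
      hproper hinv,
    fun ⟨_, hv, hSv⟩ => exists_invariant_cone_of_apply_eq_zero hS hv hSv⟩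

end Hilbert

/-! The `LieRing` instance carries its own additive group, which need not agree with the normed
one; the lemmas below never compare the two (hence the arbitrary constant `e` in place of `0` in
`forall_lie_eq_comm`). -/

section LieRing

variable {L : Type*} [LieRing L]

theorem exists_forall_lie_eq_lie_swap (y : L) : ∃ y' : L, ∀ m : L, ⁅m, y⁆ = ⁅y', m⁆ :=
  ⟨-y, fun m => by rw [neg_lie, lie_skew]⟩

theorem forall_lie_eq_comm {z e : L} : (∀ m : L, ⁅z, m⁆ = e) ↔ ∀ m : L, ⁅m, z⁆ = e := by
  constructor <;> intro h m
  · obtain rfl : e = 0 := (h 0).symm.trans (lie_zero z)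
    rw [← lie_skew, h, neg_zero]
  · obtain rfl : e = 0 := (h 0).symm.trans (zero_lie z)
    rw [← lie_skew, h, neg_zero]

end LieRing

section HilbertLie

set_option linter.overlappingInstances false

variable {g : Type*} [NormedAddCommGroup g] [InnerProductSpace ℝ g] [LieRing g]
  {ad : g → g →L[ℝ] g}

theorem ad_smul_of_apply_eq_lie (had : ∀ x y : g, ad x y = ⁅x, y⁆) (t : ℝ) (x : g) :
    ad (t • x) = t • ad x := by
  ext m
  obtain ⟨m', hm'⟩ := exists_forall_lie_eq_lie_swap m
  rw [smul_apply, had, had, hm', hm', ← had, ← had, map_smul]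

theorem ad_mem_skewAdjoint_of_apply_eq_lie [CompleteSpace g] (had : ∀ x y : g, ad x y = ⁅x, y⁆)
    (hskew : ∀ x y z : g, ⟪⁅x, y⁆, z⟫ = -⟪y, ⁅x, z⁆⟫) (x : g) :
    ad x ∈ skewAdjoint (g →L[ℝ] g) := by
  rw [skewAdjoint.mem_iff, ContinuousLinearMap.star_eq_adjoint, eq_comm,
    ContinuousLinearMap.eq_adjoint_iff]
  intro u v
  rw [neg_apply, inner_neg_left, had, had, hskew, neg_neg]

end HilbertLie

theorem hilbert_lie_proper_open_invariant_cone_iff_center_ne_bot_general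
    {g : Type*} [NormedAddCommGroup g] [InnerProductSpace ℝ g] [CompleteSpace g]
    [LieRing g]
    (ad : g → g →L[ℝ] g) (had : ∀ x y : g, ad x y = ⁅x, y⁆)
    (hskew : ∀ x y z : g, ⟪⁅x, y⁆, z⟫ = -⟪y, ⁅x, z⁆⟫) :
    (∃ Ω : Set g, Ω.Nonempty ∧ IsOpen Ω ∧ Convex ℝ Ω ∧
        (∀ t : ℝ, 0 < t → ∀ x ∈ Ω, t • x ∈ Ω) ∧ Ω ≠ Set.univ ∧
        ∀ x : g, (NormedSpace.exp (ad x) : g →L[ℝ] g) '' Ω ⊆ Ω) ↔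
      ∃ z : g, z ≠ 0 ∧ ∀ y : g, ⁅z, y⁆ = 0 := by
  have hS := exists_invariant_cone_iff_exists_ne_zero_forall_apply_eq_zero (S := range ad)
    (range_subset_iff.mpr (ad_mem_skewAdjoint_of_apply_eq_lie had hskew))
    (forall_mem_range.mpr fun x t => ⟨t • x, ad_smul_of_apply_eq_lie had t x⟩)
  simp only [forall_mem_range, had] at hS
  rw [hS]
  exact exists_congr fun z => and_congr_right fun _ => forall_lie_eq_comm.symm

/-- A Hilbert–Lie algebra contains a proper open invariant convex cone if and only if
its center is nonzero. -/
theorem hilbert_lie_proper_open_invariant_cone_iff_center_ne_bot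
    {g : Type*} [NormedAddCommGroup g] [InnerProductSpace ℝ g] [CompleteSpace g]
    [LieRing g] [LieAlgebra ℝ g]
    (ad : g → g →L[ℝ] g) (had : ∀ x y : g, ad x y = ⁅x, y⁆)
    (hskew : ∀ x y z : g, ⟪⁅x, y⁆, z⟫ = -⟪y, ⁅x, z⁆⟫) :
    (∃ Ω : Set g, Ω.Nonempty ∧ IsOpen Ω ∧ Convex ℝ Ω ∧
        (∀ t : ℝ, 0 < t → ∀ x ∈ Ω, t • x ∈ Ω) ∧ Ω ≠ Set.univ ∧
        ∀ x : g, (NormedSpace.exp (ad x) : g →L[ℝ] g) '' Ω ⊆ Ω) ↔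
      ∃ z : g, z ≠ 0 ∧ ∀ y : g, ⁅z, y⁆ = 0 :=
  hilbert_lie_proper_open_invariant_cone_iff_center_ne_bot_general ad had hskew
end

section
/- Let V be a finite-dimensional real vector space (with its canonical topology), let C ⊆ V be a nonempty open convex cone that is pointed in the sense that cl(C) ∩ (−cl(C)) = {0}, and let Γ be a subgroup of the group of linear automorphisms of V such that |det(γ)| = 1 and γ(C) = C for every γ ∈ Γ. Then for every v ∈ C, the closed convex hull of the orbit Γ·v is contained in C. -/
/-!
Vinberg's characteristic function `φ(x) = ∫_{C*} exp (-f x) df`, integrated against a Haar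
measure on the dual space, is convex and lower semicontinuous. It is invariant under `Γ`: the
transpose of `γ` preserves `C*` and, having determinant `det γ = ±1`, the Haar measure. It is
finite on `C`, since every `f ∈ C*` satisfies `f x ≥ r ‖f‖` when `ball x r ⊆ C`. It is infinite
at every point `w` of `cl C \ C`: pointedness makes `C*` contain a ball `ball u c`, a supporting
functional `f ∈ C*` at `w` has `f w = 0`, and the disjoint balls `ball (u + k f) c` (suitably
spaced) lie in `C*` with `g w` bounded on all of them. Hence the closed convex set
`cl C ∩ {φ ≤ φ v}` contains the orbit `Γ v` and is contained in `C`.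
-/

open Set MeasureTheory Metric Filter Topology Function
open scoped ENNReal

lemma Real.exp_neg_mul_le_mul_one_add_rpow_neg {c t : ℝ} (hc : 0 < c) (ht : 0 ≤ t) (k : ℕ) :
    Real.exp (-(c * t)) ≤ Real.exp c * k.factorial / c ^ k * (1 + t) ^ (-(k : ℝ)) := by
  have h := Real.pow_div_factorial_le_exp (x := c * (1 + t)) (by positivity) k
  rw [Real.rpow_neg (by positivity), Real.rpow_natCast, Real.exp_neg]
  rw [div_le_iff₀ (by positivity), mul_pow, mul_add, mul_one, Real.exp_add] at h
  have hexp := Real.exp_pos (c * t)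
  have hck : 0 < c ^ k * (1 + t) ^ k := by positivity
  field_simp
  nlinarith

lemma measure_iUnion_ball_add_smul_eq_top {E : Type*} [NormedAddCommGroup E] [NormedSpace ℝ E]
    [MeasurableSpace E] [BorelSpace E] (μ : Measure E) [μ.IsAddHaarMeasure] {c : ℝ} (hc : 0 < c)
    (u y : E) (hy : 2 * c ≤ ‖y‖) : μ (⋃ k : ℕ, ball (u + (k : ℝ) • y) c) = ∞ := by
  have hdisj : Pairwise (Disjoint on fun k : ℕ => ball (u + (k : ℝ) • y) c) := by
    intro k j hkj
    refine ball_disjoint_ball ?_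
    have h1 : (1 : ℝ) ≤ |(k : ℝ) - j| := by
      have := Int.one_le_abs (sub_ne_zero.2 (Int.ofNat_inj.not.2 hkj))
      exact_mod_cast this
    rw [dist_eq_norm, add_sub_add_left_eq_sub, ← sub_smul, norm_smul, Real.norm_eq_abs]
    nlinarith [norm_nonneg y]
  rw [measure_iUnion hdisj fun _ => measurableSet_ball]
  simp only [Measure.addHaar_ball_center]
  exact ENNReal.tsum_const_eq_top_of_ne_zero (measure_ball_pos μ 0 hc).ne'

lemma Convex.add_mem_of_smul_mem {E : Type*} [AddCommGroup E] [Module ℝ E] {C : Set E}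
    (hconv : Convex ℝ C) (hcone : ∀ t : ℝ, 0 < t → ∀ x ∈ C, t • x ∈ C) {x y : E}
    (hx : x ∈ C) (hy : y ∈ C) : x + y ∈ C := by
  have h := hcone 2 two_pos _ (hconv.midpoint_mem hx hy)
  rwa [midpoint_eq_smul_add, smul_smul, mul_invOf_self, one_smul] at h

section Dual

variable {V : Type*} [NormedAddCommGroup V] [NormedSpace ℝ V]

def dualCone (C : Set V) : PointedCone ℝ (StrongDual ℝ V) :=
  PointedCone.dual (topDualPairing ℝ V).flip C

@[simp]
lemma mem_dualCone {C : Set V} {f : StrongDual ℝ V} : f ∈ dualCone C ↔ ∀ x ∈ C, 0 ≤ f x :=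
  Iff.rfl

lemma isClosed_dualCone (C : Set V) : IsClosed (dualCone C : Set (StrongDual ℝ V)) :=
  PointedCone.isClosed_dual fun x => (ContinuousLinearMap.apply ℝ ℝ x).continuous

lemma apply_nonneg_of_mem_closure {C : Set V} {f : StrongDual ℝ V} (hf : f ∈ dualCone C)
    {x : V} (hx : x ∈ closure C) : 0 ≤ f x :=
  closure_minimal hf (isClosed_Ici.preimage f.continuous) hx

lemma ball_subset_dualCone {K : Set V} {u : StrongDual ℝ V} {c : ℝ}
    (hu : ∀ x ∈ K, c * ‖x‖ ≤ u x) : ball u c ⊆ dualCone K := by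
  refine fun g hg => mem_dualCone.2 fun x hx => ?_
  have h1 := ((u - g).le_opNorm x).trans' (le_abs_self _)
  have h2 := mul_le_mul_of_nonneg_right (mem_ball_iff_norm'.1 hg).le (norm_nonneg x)
  simp only [_root_.sub_apply] at h1
  linarith [hu x hx]

lemma mul_norm_le_apply_of_ball_subset {C : Set V} {v : V} {r : ℝ} (hr : 0 < r)
    (hball : ball v r ⊆ C) {f : StrongDual ℝ V} (hf : f ∈ dualCone C) : r * ‖f‖ ≤ f v := by
  have hle (z : V) (hz : ‖z‖ = r) : f z ≤ f v := by
    have hmem : v - z ∈ closure C := by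
      refine closure_mono hball ?_
      rw [closure_ball v hr.ne', mem_closedBall, dist_eq_norm, sub_sub_cancel_left, norm_neg, hz]
    simpa using apply_nonneg_of_mem_closure hf hmem
  have hv : 0 ≤ f v := hf (hball (mem_ball_self hr))
  rw [← le_div_iff₀' hr]
  refine ContinuousLinearMap.opNorm_le_of_unit_norm (by positivity) fun z hz => ?_
  have hrz : ‖r • z‖ = r := by rw [norm_smul, hz, Real.norm_of_nonneg hr.le, mul_one]
  have h : |r * f z| ≤ f v := abs_le.2
    ⟨by simpa [neg_le] using hle (-(r • z)) (by rw [norm_neg, hrz]), by simpa using hle (r • z) hrz⟩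
  rw [abs_mul, abs_of_pos hr] at h
  rwa [Real.norm_eq_abs, le_div_iff₀' hr]

lemma exists_dualCone_ne_zero_apply_eq_zero {C : Set V} (hopen : IsOpen C) (hconv : Convex ℝ C)
    (hcone : ∀ t : ℝ, 0 < t → ∀ x ∈ C, t • x ∈ C) {w : V} (hw : w ∈ closure C) (hwC : w ∉ C) :
    ∃ f ∈ dualCone C, f ≠ 0 ∧ f w = 0 := by
  obtain ⟨f, hf⟩ := geometric_hahn_banach_open_point hconv hopen hwC
  obtain ⟨a, ha⟩ : C.Nonempty := closure_nonempty_iff.1 ⟨w, hw⟩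
  have hf_smul {t : ℝ} (ht : 0 < t) {x : V} (hx : x ∈ C) : t * f x < f w := by
    simpa using hf _ (hcone t ht x hx)
  have hfC (x : V) (hx : x ∈ C) : f x ≤ 0 := by
    by_contra! hpos
    have := hf_smul (div_pos (add_pos_of_nonneg_of_pos (abs_nonneg (f w)) one_pos) hpos) hx
    rw [div_mul_cancel₀ _ hpos.ne'] at this
    linarith [le_abs_self (f w)]
  have hfw : f w = 0 := by
    refine le_antisymm (closure_minimal hfC (isClosed_Iic.preimage f.continuous) hw) ?_
    by_contra! hneg
    have hfa : f a < 0 := (hf a ha).trans hneg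
    have := hf_smul (div_pos_of_neg_of_neg hneg hfa) ha
    rw [div_mul_cancel₀ _ hfa.ne] at this
    exact lt_irrefl _ this
  refine ⟨-f, fun x hx => by simpa using hfC x hx, neg_ne_zero.2 fun h => ?_, by simp [hfw]⟩
  simpa [h] using hf a ha

lemma exists_properCone_coe_eq_closure {C : Set V} (hne : C.Nonempty) (hconv : Convex ℝ C)
    (hcone : ∀ t : ℝ, 0 < t → ∀ x ∈ C, t • x ∈ C) :
    ∃ K : ProperCone ℝ V, (K : Set V) = closure C := by
  let C' : ConvexCone ℝ V := ⟨C, fun t ht x hx => hcone t ht x hx,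
    fun x hx y hy => hconv.add_mem_of_smul_mem hcone hx hy⟩
  have hpt : C'.closure.Pointed :=
    .of_nonempty_of_isClosed (hne.mono subset_closure) isClosed_closure
  exact ⟨⟨C'.closure.toPointedCone hpt, isClosed_closure⟩, rfl⟩

/-- Vinberg's characteristic function of the cone `C`. -/
noncomputable def coneCharFun (μ : Measure (StrongDual ℝ V)) (C : Set V) (x : V) : ℝ≥0∞ :=
  ∫⁻ f in dualCone C, ENNReal.ofReal (Real.exp (-f x)) ∂μ

section CharFun

variable (μ : Measure (StrongDual ℝ V)) (C : Set V)

lemma coneCharFun_add_le (x y : V) {a b : ℝ} (ha : 0 ≤ a) (hb : 0 ≤ b) (hab : a + b = 1) :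
    coneCharFun μ C (a • x + b • y) ≤
      ENNReal.ofReal a * coneCharFun μ C x + ENNReal.ofReal b * coneCharFun μ C y := by
  have hconv (f : StrongDual ℝ V) : ENNReal.ofReal (Real.exp (-f (a • x + b • y))) ≤
      ENNReal.ofReal a * ENNReal.ofReal (Real.exp (-f x)) +
        ENNReal.ofReal b * ENNReal.ofReal (Real.exp (-f y)) := by
    rw [← ENNReal.ofReal_mul ha, ← ENNReal.ofReal_mul hb,
      ← ENNReal.ofReal_add (by positivity) (by positivity)]
    refine ENNReal.ofReal_le_ofReal ?_
    simpa [mul_neg, add_comm] using convexOn_exp.2 (mem_univ (-f x)) (mem_univ (-f y)) ha hb hab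
  unfold coneCharFun
  rw [← lintegral_const_mul _ (by fun_prop), ← lintegral_const_mul _ (by fun_prop),
    ← lintegral_add_left (by fun_prop)]
  exact lintegral_mono hconv

lemma convex_setOf_coneCharFun_le (r : ℝ≥0∞) : Convex ℝ {x | coneCharFun μ C x ≤ r} := by
  intro x hx y hy a b ha hb hab
  calc coneCharFun μ C (a • x + b • y)
      ≤ ENNReal.ofReal a * coneCharFun μ C x + ENNReal.ofReal b * coneCharFun μ C y :=
        coneCharFun_add_le μ C x y ha hb hab
    _ ≤ ENNReal.ofReal a * r + ENNReal.ofReal b * r := by gcongr <;> assumption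
    _ = r := by rw [← add_mul, ← ENNReal.ofReal_add ha hb, hab, ENNReal.ofReal_one, one_mul]

lemma isClosed_setOf_coneCharFun_le (r : ℝ≥0∞) : IsClosed {x | coneCharFun μ C x ≤ r} := by
  refine IsSeqClosed.isClosed fun x w hx hxw => ?_
  have hlim (f : StrongDual ℝ V) : Tendsto (fun n => ENNReal.ofReal (Real.exp (-f (x n))))
      atTop (𝓝 (ENNReal.ofReal (Real.exp (-f w)))) := by
    have := ((f.continuous.tendsto w).comp hxw).neg
    exact (ENNReal.continuous_ofReal.tendsto _).comp ((Real.continuous_exp.tendsto _).comp this)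
  calc coneCharFun μ C w
      = ∫⁻ f in dualCone C, liminf (fun n => ENNReal.ofReal (Real.exp (-f (x n)))) atTop ∂μ :=
        lintegral_congr fun f => (hlim f).liminf_eq.symm
    _ ≤ liminf (fun n => coneCharFun μ C (x n)) atTop :=
        lintegral_liminf_le fun n => by fun_prop
    _ ≤ r := liminf_le_of_frequently_le' (Frequently.of_forall hx)

end CharFun

lemma coneCharFun_eq_top_of_ball_subset (μ : Measure (StrongDual ℝ V)) [μ.IsAddHaarMeasure]
    {C : Set V} {u : StrongDual ℝ V} {c : ℝ} (hc : 0 < c) (hball : ball u c ⊆ dualCone C)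
    {f : StrongDual ℝ V} (hfC : f ∈ dualCone C) (hf0 : f ≠ 0) {w : V} (hfw : f w = 0) :
    coneCharFun μ C w = ∞ := by
  set y := (2 * c / ‖f‖) • f
  have hy : ‖y‖ = 2 * c := by
    rw [norm_smul, Real.norm_of_nonneg (by positivity), div_mul_cancel₀ _ (norm_ne_zero_iff.2 hf0)]
  set T := ⋃ k : ℕ, ball (u + (k : ℝ) • y) c
  have hT : T ⊆ dualCone C := by
    refine iUnion_subset fun k g hg => ?_
    have hyC : (k : ℝ) • y ∈ dualCone C := (dualCone C).smul_mem (by positivity)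
      ((dualCone C).smul_mem (by positivity) hfC)
    have hgu : g - (k : ℝ) • y ∈ ball u c := by
      rwa [mem_ball, dist_eq_norm, sub_sub, add_comm, ← dist_eq_norm]
    simpa using (dualCone C).add_mem (hball hgu) hyC
  have hTw : ∀ g ∈ T, g w ≤ u w + c * ‖w‖ := by
    intro g hg
    obtain ⟨k, hk⟩ := mem_iUnion.1 hg
    have h1 := ((g - (u + (k : ℝ) • y)).le_opNorm w).trans'
      (le_abs_self ((g - (u + (k : ℝ) • y)) w))
    have h2 := mul_le_mul_of_nonneg_right (mem_ball_iff_norm.1 hk).le (norm_nonneg w)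
    simp only [y, sub_apply, add_apply, smul_apply, hfw, smul_eq_mul, mul_zero, add_zero] at h1
    linarith
  refine top_unique ?_
  calc ∞ = ∫⁻ _ in T, ENNReal.ofReal (Real.exp (-(u w + c * ‖w‖))) ∂μ := by
        rw [setLIntegral_const, measure_iUnion_ball_add_smul_eq_top μ hc u y hy.ge,
          ENNReal.mul_top (by simpa using Real.exp_pos _)]
    _ ≤ ∫⁻ g in T, ENNReal.ofReal (Real.exp (-g w)) ∂μ :=
        setLIntegral_mono (by fun_prop) fun g hg =>
          ENNReal.ofReal_le_ofReal (Real.exp_le_exp.2 (neg_le_neg (hTw g hg)))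
    _ ≤ coneCharFun μ C w := lintegral_mono_set hT

section FiniteDimensional

variable [FiniteDimensional ℝ V]

lemma ProperCone.exists_mul_norm_le_apply (K : ProperCone ℝ V) (hK : ∀ x ∈ K, -x ∈ K → x = 0) :
    ∃ u : StrongDual ℝ V, ∃ c : ℝ, 0 < c ∧ ∀ x ∈ K, c * ‖x‖ ≤ u x := by
  set S := (K : Set V) ∩ sphere 0 1
  have hS : IsCompact S := (isCompact_sphere 0 1).inter_left K.isClosed
  have hsep (x : S) : ∃ f ∈ dualCone (K : Set V), 0 < f x := by
    have hx0 : (x : V) ≠ 0 := ne_zero_of_mem_sphere one_ne_zero (⟨x, x.2.2⟩ : sphere (0 : V) 1)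
    obtain ⟨f, hfK, hfx⟩ := K.hyperplane_separation_point fun h => hx0 (hK x x.2.1 h)
    exact ⟨f, hfK, by simpa using hfx⟩
  choose f hfK hfpos using hsep
  obtain ⟨t, ht⟩ := hS.elim_finite_subcover (fun x : S => {y : V | 0 < f x y})
    (fun x => isOpen_lt continuous_const (f x).continuous)
    (fun y hy => mem_iUnion.2 ⟨⟨y, hy⟩, hfpos ⟨y, hy⟩⟩)
  set u := ∑ x ∈ t, f x
  have hupos : ∀ y ∈ S, 0 < u y := by
    intro y hy
    obtain ⟨x, hxt, hxy⟩ := mem_iUnion₂.1 (ht hy)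
    simp only [u, _root_.sum_apply]
    exact Finset.sum_pos' (fun z _ => hfK z hy.1) ⟨x, hxt, hxy⟩
  obtain ⟨c, hc, hcS⟩ := hS.exists_forall_le' u.continuous.continuousOn hupos
  refine ⟨u, c, hc, fun x hx => ?_⟩
  rcases eq_or_ne x 0 with rfl | hx0
  · simp
  have hxS : ‖x‖⁻¹ • x ∈ S := ⟨K.smul_mem hx (by positivity), by simp [norm_smul, hx0]⟩
  have h := mul_le_mul_of_nonneg_left (hcS _ hxS) (norm_nonneg x)
  rwa [map_smul, smul_eq_mul, ← mul_assoc, mul_inv_cancel₀ (norm_ne_zero_iff.2 hx0), one_mul,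
    mul_comm] at h

lemma measurePreserving_precomp (μ : Measure (StrongDual ℝ V)) [μ.IsAddHaarMeasure]
    (g : V →ₗ[ℝ] V) (hg : |LinearMap.det g| = 1) :
    MeasurePreserving (fun f : StrongDual ℝ V => f ∘L LinearMap.toContinuousLinearMap g) μ μ := by
  let T : Module.Dual ℝ V ≃ₗ[ℝ] StrongDual ℝ V := LinearMap.toContinuousLinearMap
  let P : StrongDual ℝ V →ₗ[ℝ] StrongDual ℝ V := T ∘ₗ g.dualMap ∘ₗ T.symm
  have hP : LinearMap.det P = LinearMap.det g := by
    rw [← LinearMap.det_dualMap g]; exact LinearMap.det_conj _ _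
  have hdet : LinearMap.det P ≠ 0 := by
    intro h; rw [← hP, h] at hg; simp at hg
  change MeasurePreserving P μ μ
  refine ⟨P.continuous_of_finiteDimensional.measurable, ?_⟩
  rw [Measure.map_linearMap_addHaar_eq_smul_addHaar μ hdet, abs_inv, hP, hg]
  simp

lemma coneCharFun_apply_eq_of_image_eq (μ : Measure (StrongDual ℝ V)) [μ.IsAddHaarMeasure]
    {C : Set V} (g : V ≃ₗ[ℝ] V) (hg : |LinearMap.det (g : V →ₗ[ℝ] V)| = 1) (hgC : g '' C = C)
    (x : V) :
    coneCharFun μ C (g x) = coneCharFun μ C x := by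
  set G := LinearMap.toContinuousLinearMap (g : V →ₗ[ℝ] V)
  have hpre : (fun f : StrongDual ℝ V => f ∘L G) ⁻¹' dualCone C = dualCone C := by
    ext f
    conv_rhs => rw [← hgC]
    simp [G]
  have := (measurePreserving_precomp μ _ hg).setLIntegral_comp_preimage
    (isClosed_dualCone C).measurableSet
    (f := fun f : StrongDual ℝ V => ENNReal.ofReal (Real.exp (-f x))) (by fun_prop)
  rwa [hpre] at this

lemma coneCharFun_lt_top (μ : Measure (StrongDual ℝ V)) [μ.IsAddHaarMeasure] {C : Set V}
    {v : V} (hv : v ∈ interior C) : coneCharFun μ C v < ∞ := by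
  obtain ⟨r, hr, hball⟩ := Metric.isOpen_iff.1 isOpen_interior v hv
  set k := Module.finrank ℝ (StrongDual ℝ V) + 1
  set M := Real.exp r * k.factorial / r ^ k
  have hdecay (f : StrongDual ℝ V) (hf : f ∈ dualCone C) :
      ENNReal.ofReal (Real.exp (-f v)) ≤
        ENNReal.ofReal M * ENNReal.ofReal ((1 + ‖f‖) ^ (-(k : ℝ))) := by
    have hfv := mul_norm_le_apply_of_ball_subset hr (hball.trans interior_subset) hf
    rw [← ENNReal.ofReal_mul (by positivity)]
    exact ENNReal.ofReal_le_ofReal ((Real.exp_le_exp.2 (neg_le_neg hfv)).trans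
      (Real.exp_neg_mul_le_mul_one_add_rpow_neg hr (norm_nonneg f) k))
  have hfin : ∫⁻ f : StrongDual ℝ V, ENNReal.ofReal ((1 + ‖f‖) ^ (-(k : ℝ))) ∂μ < ∞ :=
    finite_integral_one_add_norm (by push_cast [k]; linarith)
  calc coneCharFun μ C v
      ≤ ∫⁻ f in dualCone C, ENNReal.ofReal M * ENNReal.ofReal ((1 + ‖f‖) ^ (-(k : ℝ))) ∂μ :=
        setLIntegral_mono (by fun_prop) hdecay
    _ ≤ ∫⁻ f, ENNReal.ofReal M * ENNReal.ofReal ((1 + ‖f‖) ^ (-(k : ℝ))) ∂μ :=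
        setLIntegral_le_lintegral _ _
    _ < ∞ := by
        rw [lintegral_const_mul _ (by fun_prop)]
        exact ENNReal.mul_lt_top ENNReal.ofReal_lt_top hfin

lemma coneCharFun_eq_top (μ : Measure (StrongDual ℝ V)) [μ.IsAddHaarMeasure] {C : Set V}
    (hopen : IsOpen C) (hconv : Convex ℝ C) (hcone : ∀ t : ℝ, 0 < t → ∀ x ∈ C, t • x ∈ C)
    (hpointed : closure C ∩ (-(closure C)) = {0}) {w : V} (hw : w ∈ closure C) (hwC : w ∉ C) :
    coneCharFun μ C w = ∞ := by
  obtain ⟨K, hK⟩ := exists_properCone_coe_eq_closure (closure_nonempty_iff.1 ⟨w, hw⟩) hconv hcone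
  have hsalient (x : V) (hx : x ∈ K) (hnx : -x ∈ K) : x = 0 := by
    rw [← SetLike.mem_coe, hK] at hx hnx
    have hx0 : x ∈ closure C ∩ -closure C := ⟨hx, mem_neg.2 hnx⟩
    rwa [hpointed] at hx0
  obtain ⟨u, c, hc, hu⟩ := K.exists_mul_norm_le_apply hsalient
  have hball : ball u c ⊆ dualCone C :=
    ball_subset_dualCone fun x hx => hu x (by rw [← SetLike.mem_coe, hK]; exact subset_closure hx)
  obtain ⟨f, hfC, hf0, hfw⟩ := exists_dualCone_ne_zero_apply_eq_zero hopen hconv hcone hw hwC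
  exact coneCharFun_eq_top_of_ball_subset μ hc hball hfC hf0 hfw

end FiniteDimensional

end Dual

theorem closed_convexHull_orbit_subset_cone_general
    {V : Type*} [NormedAddCommGroup V] [NormedSpace ℝ V] [FiniteDimensional ℝ V]
    (C : Set V) (hopen : IsOpen C) (hconv : Convex ℝ C)
    (hcone : ∀ t : ℝ, 0 < t → ∀ x ∈ C, t • x ∈ C)
    (hpointed : closure C ∩ (-(closure C)) = {0})
    (Γ : Subgroup (V ≃ₗ[ℝ] V))
    (hdet : ∀ γ ∈ Γ, |LinearMap.det (γ : V ≃ₗ[ℝ] V).toLinearMap| = 1)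
    (hinv : ∀ γ ∈ Γ, (γ : V ≃ₗ[ℝ] V) '' C = C)
    (v : V) (hv : v ∈ C) :
    closure (convexHull ℝ {w : V | ∃ γ ∈ Γ, (γ : V ≃ₗ[ℝ] V) v = w}) ⊆ C := by
  set φ := coneCharFun (Measure.addHaar : Measure (StrongDual ℝ V)) C
  have horbit : {w : V | ∃ γ ∈ Γ, (γ : V ≃ₗ[ℝ] V) v = w} ⊆ closure C ∩ {x | φ x ≤ φ v} := by
    rintro _ ⟨γ, hγ, rfl⟩
    exact ⟨subset_closure (hinv γ hγ ▸ mem_image_of_mem _ hv),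
      (coneCharFun_apply_eq_of_image_eq _ γ (hdet γ hγ) (hinv γ hγ) v).le⟩
  have hhull := closure_minimal (convexHull_min horbit
      (hconv.closure.inter (convex_setOf_coneCharFun_le _ C _)))
    (isClosed_closure.inter (isClosed_setOf_coneCharFun_le _ C _))
  intro w hw
  by_contra hwC
  have hφv := coneCharFun_lt_top Measure.addHaar (hopen.interior_eq.symm ▸ hv)
  rw [← coneCharFun_eq_top Measure.addHaar hopen hconv hcone hpointed (hhull hw).1 hwC] at hφv
  exact (hhull hw).2.not_gt hφv

/-- If `C` is a pointed nonempty open convex cone in a finite-dimensional real vector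
space and `Γ` is a group of linear automorphisms with `|det γ| = 1` preserving `C`, then
the closed convex hull of every `Γ`-orbit of a point of `C` is contained in `C`. -/
theorem closed_convexHull_orbit_subset_cone
    {V : Type*} [NormedAddCommGroup V] [NormedSpace ℝ V] [FiniteDimensional ℝ V]
    (C : Set V) (hne : C.Nonempty) (hopen : IsOpen C) (hconv : Convex ℝ C)
    (hcone : ∀ t : ℝ, 0 < t → ∀ x ∈ C, t • x ∈ C)
    (hpointed : closure C ∩ (-(closure C)) = {0})
    (Γ : Subgroup (V ≃ₗ[ℝ] V))
    (hdet : ∀ γ ∈ Γ, |LinearMap.det (γ : V ≃ₗ[ℝ] V).toLinearMap| = 1)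
    (hinv : ∀ γ ∈ Γ, (γ : V ≃ₗ[ℝ] V) '' C = C)
    (v : V) (hv : v ∈ C) :
    closure (convexHull ℝ {w : V | ∃ γ ∈ Γ, (γ : V ≃ₗ[ℝ] V) v = w}) ⊆ C :=
  closed_convexHull_orbit_subset_cone_general C hopen hconv hcone hpointed Γ hdet hinv v hv
end

section
/- Let (V, (α_s)_{s∈S}, (α_s^∨)_{s∈S}) be a linear Coxeter system with Coxeter group W, fundamental chamber K, and Tits cone 𝓣 = ⋃_{w∈W} w(K). For v ∈ V set C_v := cone{ w(α_s^∨) : s ∈ S, w ∈ W, α_s(w⁻¹ v) > 0 } (the set of finite nonnegative linear combinations of these vectors). Then for every v ∈ 𝓣 and every x ∈ C_v, there exists ε > 0 such that v − ε x lies in the convex hull of the orbit W·v. -/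
/-- For a linear Coxeter system with Coxeter group `W`, fundamental chamber `K` and Tits
cone `𝓣 = W·K`: for every `v ∈ 𝓣` and every `x` in the cone
`C_v = cone{ w(α_s^∨) : α_s(w⁻¹ v) > 0 }`, there is `ε > 0` with
`v - ε x ∈ conv(W·v)`. -/
theorem titsCone_orbit_convexHull_lemma
    {V : Type*} [NormedAddCommGroup V] [NormedSpace ℝ V] [FiniteDimensional ℝ V]
    {S : Type*} [Fintype S]
    (α : S → V →ₗ[ℝ] ℝ) (coroot : S → V)
    (hpair : ∀ s : S, α s (coroot s) = 2)
    (ρ : S → V ≃ₗ[ℝ] V) (hρ : ∀ (s : S) (v : V), ρ s v = v - α s v • coroot s)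
    (W : Subgroup (V ≃ₗ[ℝ] V)) (hW : W = Subgroup.closure (Set.range ρ))
    (K : Set V) (hK : K = {v : V | ∀ s : S, 0 ≤ α s v})
    (hLCS1 : (interior K).Nonempty)
    (hLCS2 : ∀ s : S, ¬ ∃ c : S → ℝ, (∀ t : S, 0 ≤ c t) ∧ c s = 0 ∧
      α s = ∑ t : S, c t • α t)
    (hLCS3 : ∀ w ∈ W, w ≠ 1 → ((w : V ≃ₗ[ℝ] V) '' interior K) ∩ interior K = ∅)
    (𝓣 : Set V) (h𝓣 : 𝓣 = ⋃ w ∈ W, (w : V ≃ₗ[ℝ] V) '' K)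
    (v : V) (hv : v ∈ 𝓣)
    (x : V)
    (hx : ∃ (n : ℕ) (c : Fin n → ℝ) (z : Fin n → V), (∀ i, 0 ≤ c i) ∧
      (∀ i, ∃ s : S, ∃ w ∈ W, 0 < α s ((w : V ≃ₗ[ℝ] V)⁻¹ v) ∧
        z i = (w : V ≃ₗ[ℝ] V) (coroot s)) ∧
      x = ∑ i, c i • z i) :
    ∃ ε > (0 : ℝ), v - ε • x ∈ convexHull ℝ {y : V | ∃ w ∈ W, (w : V ≃ₗ[ℝ] V) v = y} := by
  obtain ⟨n, c, z, hc, hz, hxeq⟩ := hx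
  choose s wfun hw ht hzw using hz
  set Orb : Set V := {y : V | ∃ w ∈ W, (w : V ≃ₗ[ℝ] V) v = y} with hOrbdef
  set t : Fin n → ℝ := fun i => α (s i) ((↑(wfun i) : V ≃ₗ[ℝ] V)⁻¹ v) with htdef
  have htpos : ∀ i, 0 < t i := ht
  have hvOrb : v ∈ Orb := ⟨1, one_mem W, rfl⟩
  have hpOrb : ∀ i, v - t i • z i ∈ Orb := by
    intro i
    have hρmem : ρ (s i) ∈ W := by
      rw [hW]; exact Subgroup.subset_closure ⟨s i, rfl⟩
    refine ⟨(⟨wfun i, hw i⟩ : W) * (⟨ρ (s i), hρmem⟩ : W) * (⟨wfun i, hw i⟩ : W)⁻¹,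
      mul_mem (mul_mem (hw i) hρmem) (inv_mem (hw i)), ?_⟩
    show (wfun i) ((ρ (s i)) ((wfun i)⁻¹ v)) = v - t i • z i
    have hinv : (wfun i) ((wfun i)⁻¹ v) = v := (wfun i).apply_symm_apply v
    rw [hρ, map_sub, map_smul, hinv, hzw i]
  -- choose ε
  set Ssum : ℝ := ∑ i, c i / t i with hS
  have hSnonneg : 0 ≤ Ssum :=
    Finset.sum_nonneg fun i _ => div_nonneg (hc i) (htpos i).le
  refine ⟨1 / (1 + Ssum), by positivity, ?_⟩
  set ε : ℝ := 1 / (1 + Ssum) with hε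
  have hεpos : 0 < ε := by positivity
  set μ : Fin n → ℝ := fun i => ε * (c i / t i) with hμ
  have hμnonneg : ∀ i, 0 ≤ μ i := fun i =>
    mul_nonneg hεpos.le (div_nonneg (hc i) (htpos i).le)
  have hμsum : ∑ i, μ i = ε * Ssum := by rw [hμ, ← Finset.mul_sum]
  have hμsum_le : ∑ i, μ i ≤ 1 := by
    rw [hμsum, hε]
    rw [div_mul_eq_mul_div, one_mul, div_le_one (by positivity)]
    linarith
  -- express v - ε • x as a convex combination
  have key : v - ε • x
      = (1 - ∑ i, μ i) • v + ∑ i, μ i • (v - t i • z i) := by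
    have hmul : ∀ i, μ i * t i = ε * c i := by
      intro i
      show ε * (c i / t i) * t i = ε * c i
      rw [mul_assoc, div_mul_cancel₀ _ (htpos i).ne']
    have h1 : ∀ i, μ i • (v - t i • z i) = μ i • v - (ε * c i) • z i := by
      intro i
      rw [smul_sub, smul_smul, hmul i]
    rw [Finset.sum_congr rfl fun i _ => h1 i, Finset.sum_sub_distrib,
      ← Finset.sum_smul, hxeq, Finset.smul_sum]
    have h2 : ∀ i, ε • (c i • z i) = (ε * c i) • z i := fun i => by
      rw [smul_smul]
    rw [Finset.sum_congr rfl fun i _ => h2 i, sub_smul, one_smul]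
    abel
  rw [key]
  -- membership in convex hull
  have hconv : Convex ℝ (convexHull ℝ Orb) := convex_convexHull ℝ Orb
  have hmemv : v ∈ convexHull ℝ Orb := subset_convexHull ℝ Orb hvOrb
  have hmemp : ∀ i, v - t i • z i ∈ convexHull ℝ Orb :=
    fun i => subset_convexHull ℝ Orb (hpOrb i)
  have := hconv.sum_mem (t := (Finset.univ : Finset (Option (Fin n))))
    (w := fun o => Option.elim o (1 - ∑ i, μ i) μ)
    (z := fun o => Option.elim o v (fun i => v - t i • z i))
    (fun o _ => by
      cases o with
      | none => simp only [Option.elim]; linarith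
      | some i => exact hμnonneg i)
    (by rw [Fintype.sum_option]; simp [Option.elim])
    (fun o _ => by
      cases o with
      | none => exact hmemv
      | some i => exact hmemp i)
  rw [Fintype.sum_option] at this
  simpa [Option.elim] using this
end

section
/- Let E be a real vector space and β : E × E → ℝ a symmetric bilinear form which is Lorentzian: there exists v₀ ∈ E with β(v₀, v₀) > 0 such that β(x, x) < 0 for every x ≠ 0 with β(v₀, x) = 0. Then for all v, x ∈ E with β(v, v) ≥ 0, the inverse Cauchy–Schwarz inequality β(v, v) · β(x, x) ≤ β(x, v)² holds. -/
/-!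
If `β v v > 0`, then `β` is nonpositive on the `β`-orthogonal complement of `v`: otherwise `v`
and some `w ⊥ v` would span a plane on which `β` is positive definite, and that plane meets the
hyperplane `β v₀ = 0`, where `β` is nonpositive. Applied to `w = β v v • x - β x v • v`, whose
square is `β v v * (β v v * β x x - β x v ^ 2)`, this gives the inequality.
-/

namespace LinearMap

variable {R M : Type*} [AddCommGroup M]

theorem apply_smul_add_smul_self_of_orthogonal [CommRing R] [Module R M]
    {β : M →ₗ[R] M →ₗ[R] R} (hsymm : ∀ x y, β x y = β y x) {v w : M}
    (hvw : β v w = 0) (a b : R) :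
    β (a • v + b • w) (a • v + b • w) = a ^ 2 * β v v + b ^ 2 * β w w := by
  have hwv : β w v = 0 := hsymm w v ▸ hvw
  simp only [map_add, map_smul, add_apply, smul_apply, smul_eq_mul, hvw, hwv]
  ring

variable [CommRing R] [LinearOrder R] [IsStrictOrderedRing R] [Module R M]
  {β : M →ₗ[R] M →ₗ[R] R}

theorem apply_self_nonpos_of_orthogonal (hsymm : ∀ x y, β x y = β y x) {v₀ : M}
    (hv₀ : ∀ x, β v₀ x = 0 → β x x ≤ 0) {v w : M} (hv : 0 < β v v) (hvw : β v w = 0) :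
    β w w ≤ 0 := by
  by_contra! hw
  have hv₀v : β v₀ v ≠ 0 := fun h => (hv₀ v h).not_gt hv
  set u := (-β v₀ w) • v + β v₀ v • w
  have hv₀u : β v₀ u = 0 := by
    simp only [u, map_add, map_smul, smul_eq_mul]
    ring
  have hu : 0 < β u u := by
    rw [apply_smul_add_smul_self_of_orthogonal hsymm hvw]
    positivity
  exact (hv₀ u hv₀u).not_gt hu

theorem mul_apply_self_le_sq_of_orthogonal_nonpos (hsymm : ∀ x y, β x y = β y x) {v : M}
    (hv : 0 < β v v) (horth : ∀ w, β v w = 0 → β w w ≤ 0) (x : M) :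
    β v v * β x x ≤ β x v ^ 2 := by
  have hvx : β v x = β x v := hsymm v x
  have hw := horth (β v v • x - β x v • v) (by simp [hvx]; ring)
  have expand : β (β v v • x - β x v • v) (β v v • x - β x v • v)
      = β v v * (β v v * β x x - β x v ^ 2) := by
    simp only [map_sub, map_smul, sub_apply, smul_apply, smul_eq_mul, hvx]
    ring
  rw [expand] at hw
  nlinarith

end LinearMap

theorem lorentzian_inverse_cauchy_schwarz_general
    {E : Type*} [AddCommGroup E] [Module ℝ E]
    (β : E →ₗ[ℝ] E →ₗ[ℝ] ℝ) (hsymm : ∀ x y : E, β x y = β y x)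
    (v₀ : E)
    (hneg : ∀ x : E, x ≠ 0 → β v₀ x = 0 → β x x < 0)
    (v x : E) (hv : 0 ≤ β v v) :
    β v v * β x x ≤ (β x v) ^ 2 := by
  rcases hv.eq_or_lt with hv0 | hvpos
  · rw [← hv0, zero_mul]
    exact sq_nonneg _
  have hv₀ : ∀ y, β v₀ y = 0 → β y y ≤ 0 := fun y hy => by
    rcases eq_or_ne y 0 with rfl | hy0
    · simp
    · exact (hneg y hy0 hy).le
  exact LinearMap.mul_apply_self_le_sq_of_orthogonal_nonpos hsymm hvpos
    (fun _ => LinearMap.apply_self_nonpos_of_orthogonal hsymm hv₀ hvpos) x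

/-- **Inverse Cauchy–Schwarz inequality** for a Lorentzian symmetric bilinear form:
if `β(v,v) ≥ 0`, then `β(v,v)·β(x,x) ≤ β(x,v)²`. -/
theorem lorentzian_inverse_cauchy_schwarz
    {E : Type*} [AddCommGroup E] [Module ℝ E]
    (β : E →ₗ[ℝ] E →ₗ[ℝ] ℝ) (hsymm : ∀ x y : E, β x y = β y x)
    (v₀ : E) (hv₀ : 0 < β v₀ v₀)
    (hneg : ∀ x : E, x ≠ 0 → β v₀ x = 0 → β x x < 0)
    (v x : E) (hv : 0 ≤ β v v) :
    β v v * β x x ≤ (β x v) ^ 2 :=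
  lorentzian_inverse_cauchy_schwarz_general β hsymm v₀ hneg v x hv
end

section
/- Let E be a real vector space and β : E × E → ℝ a Lorentzian symmetric bilinear form with timelike vector v₀ (β(v₀,v₀) > 0 and β(x,x) < 0 for all nonzero x with β(v₀,x) = 0). Define W := {v ∈ E : β(v, v) > 0 and β(v₀, v) > 0}. Then: (1) W is a convex cone (convex and stable under multiplication by every t > 0); (2) for all v, w ∈ W one has β(v + w, v + w) ≥ β(v, v), equivalently χ(v + w) ≤ χ(v) for χ(v) := β(v, v)⁻¹; and (3) χ is strictly convex on W: for all v ≠ w in W and t ∈ (0, 1), χ(t v + (1 − t) w) < t χ(v) + (1 − t) χ(w). -/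
/-!
Every timelike `v` in the cone sees a negative definite orthogonal complement, which gives the
reversed Cauchy–Schwarz inequality `√β(v,v) √β(w,w) ≤ β(v,w)` on the cone, strict unless `v`, `w`
are proportional. Hence `β(av + bw, av + bw) ≥ (a√β(v,v) + b√β(w,w))²`, and strict convexity of
`χ` follows from strict convexity and monotonicity of `x ↦ x⁻²` on `(0, ∞)`: for `v ≠ w` either
the reversed Cauchy–Schwarz inequality is strict or `β(v,v) ≠ β(w,w)`.
-/

open Set

theorem strictConvexOn_inv_sq : StrictConvexOn ℝ (Ioi 0) fun x : ℝ => (x ^ 2)⁻¹ := by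
  simpa [zpow_neg] using strictConvexOn_zpow (m := -2) (by norm_num) (by norm_num)

section Lorentzian

variable {E : Type*} [AddCommGroup E] [Module ℝ E] {β : E →ₗ[ℝ] E →ₗ[ℝ] ℝ} {v₀ v w : E}

def futureCone (β : E →ₗ[ℝ] E →ₗ[ℝ] ℝ) (v₀ : E) : Set E := {v | 0 < β v v ∧ 0 < β v₀ v}

theorem apply_smul_add_smul_self (hsymm : ∀ x y : E, β x y = β y x) (a b : ℝ) (v w : E) :
    β (a • v + b • w) (a • v + b • w) = a ^ 2 * β v v + 2 * a * b * β v w + b ^ 2 * β w w := by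
  simp only [map_add, map_smul, LinearMap.add_apply, LinearMap.smul_apply, smul_eq_mul, hsymm w v]
  ring

theorem apply_smul_sub_smul_self (hsymm : ∀ x y : E, β x y = β y x) (a b : ℝ) (v w : E) :
    β (a • v - b • w) (a • v - b • w) = a ^ 2 * β v v - 2 * a * b * β v w + b ^ 2 * β w w := by
  rw [sub_eq_add_neg, ← neg_smul, apply_smul_add_smul_self hsymm]
  ring

theorem apply_self_nonpos_of_orthogonal (hneg : ∀ x : E, x ≠ 0 → β v₀ x = 0 → β x x < 0)
    {x : E} (hx : β v₀ x = 0) : β x x ≤ 0 := by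
  rcases eq_or_ne x 0 with rfl | hx0
  · simp
  · exact (hneg x hx0 hx).le

/-- The combination `β(v₀,w) v - β(v₀,v) w` is `β`-orthogonal to `v₀`, so it is not timelike. -/
theorem sq_mul_apply_self_sub_add_sq_mul_apply_self_nonpos (hsymm : ∀ x y : E, β x y = β y x)
    (hneg : ∀ x : E, x ≠ 0 → β v₀ x = 0 → β x x < 0) (v w : E) :
    β v₀ w ^ 2 * β v v - 2 * β v₀ w * β v₀ v * β v w + β v₀ v ^ 2 * β w w ≤ 0 := by
  have horth : β v₀ (β v₀ w • v - β v₀ v • w) = 0 := by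
    simp only [map_sub, map_smul, smul_eq_mul]
    ring
  have := apply_self_nonpos_of_orthogonal hneg horth
  rwa [apply_smul_sub_smul_self hsymm] at this

theorem apply_self_neg_of_orthogonal (hsymm : ∀ x y : E, β x y = β y x)
    (hneg : ∀ x : E, x ≠ 0 → β v₀ x = 0 → β x x < 0) (hv : 0 < β v v) {x : E} (hx : x ≠ 0)
    (hvx : β v x = 0) : β x x < 0 := by
  by_contra! hxx
  have hcomb := sq_mul_apply_self_sub_add_sq_mul_apply_self_nonpos hsymm hneg v x
  rw [hvx, mul_zero, sub_zero] at hcomb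
  have hv₀x : β v₀ x = 0 := by
    by_contra h
    nlinarith [mul_pos (sq_pos_of_ne_zero h) hv, mul_nonneg (sq_nonneg (β v₀ v)) hxx]
  exact (hneg x hx hv₀x).not_ge hxx

theorem mul_apply_self_lt_sq_or_exists_eq_smul (hsymm : ∀ x y : E, β x y = β y x)
    (hneg : ∀ x : E, x ≠ 0 → β v₀ x = 0 → β x x < 0) (hv : 0 < β v v) (w : E) :
    β v v * β w w < β v w ^ 2 ∨ ∃ c : ℝ, w = c • v := by
  set x := β v v • w - β v w • v
  have hvx : β v x = 0 := by
    simp only [x, map_sub, map_smul, smul_eq_mul]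
    ring
  rcases eq_or_ne x 0 with hx | hx
  · refine .inr ⟨β v w / β v v, ?_⟩
    rw [sub_eq_zero] at hx
    rw [div_eq_inv_mul, mul_smul, ← hx, smul_smul, inv_mul_cancel₀ hv.ne', one_smul]
  · have hxx : β x x = β v v * (β v v * β w w - β v w ^ 2) := by
      simp only [x, apply_smul_sub_smul_self hsymm, hsymm w v]
      ring
    have := apply_self_neg_of_orthogonal hsymm hneg hv hx hvx
    rw [hxx] at this
    exact .inl (by nlinarith)

theorem apply_pos_of_mem_futureCone (hsymm : ∀ x y : E, β x y = β y x)
    (hneg : ∀ x : E, x ≠ 0 → β v₀ x = 0 → β x x < 0) (hv : v ∈ futureCone β v₀)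
    (hw : w ∈ futureCone β v₀) : 0 < β v w := by
  by_contra! hvw
  have := sq_mul_apply_self_sub_add_sq_mul_apply_self_nonpos hsymm hneg v w
  nlinarith [mul_pos (pow_pos hw.2 2) hv.1, mul_pos (pow_pos hv.2 2) hw.1,
    mul_pos hw.2 hv.2]

theorem smul_mem_futureCone {c : ℝ} (hc : 0 < c) (hv : v ∈ futureCone β v₀) :
    c • v ∈ futureCone β v₀ := by
  simp only [futureCone, mem_ofPred_eq, map_smul, LinearMap.smul_apply, smul_eq_mul]
  exact ⟨mul_pos hc (mul_pos hc hv.1), mul_pos hc hv.2⟩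

theorem apply_self_lt_apply_add_self (hsymm : ∀ x y : E, β x y = β y x)
    (hneg : ∀ x : E, x ≠ 0 → β v₀ x = 0 → β x x < 0) (hv : v ∈ futureCone β v₀)
    (hw : w ∈ futureCone β v₀) : β v v < β (v + w) (v + w) := by
  have h := apply_smul_add_smul_self hsymm 1 1 v w
  simp only [one_smul] at h
  nlinarith [apply_pos_of_mem_futureCone hsymm hneg hv hw, hw.1]

theorem add_mem_futureCone (hsymm : ∀ x y : E, β x y = β y x)
    (hneg : ∀ x : E, x ≠ 0 → β v₀ x = 0 → β x x < 0) (hv : v ∈ futureCone β v₀)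
    (hw : w ∈ futureCone β v₀) : v + w ∈ futureCone β v₀ := by
  refine ⟨hv.1.trans (apply_self_lt_apply_add_self hsymm hneg hv hw), ?_⟩
  rw [map_add]
  exact add_pos hv.2 hw.2

theorem convex_futureCone (hsymm : ∀ x y : E, β x y = β y x)
    (hneg : ∀ x : E, x ≠ 0 → β v₀ x = 0 → β x x < 0) : Convex ℝ (futureCone β v₀) :=
  ConvexCone.convex
    { carrier := futureCone β v₀
      smul_mem' := fun _ hc _ hv => smul_mem_futureCone hc hv
      add_mem' := fun _ hv _ hw => add_mem_futureCone hsymm hneg hv hw }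

theorem sqrt_mul_sqrt_le_apply (hsymm : ∀ x y : E, β x y = β y x)
    (hneg : ∀ x : E, x ≠ 0 → β v₀ x = 0 → β x x < 0) (hv : v ∈ futureCone β v₀)
    (hw : w ∈ futureCone β v₀) : √(β v v) * √(β w w) ≤ β v w := by
  have hsq : β v v * β w w ≤ β v w ^ 2 := by
    rcases mul_apply_self_lt_sq_or_exists_eq_smul hsymm hneg hv.1 w with hlt | ⟨c, rfl⟩
    · exact hlt.le
    · simp only [map_smul, LinearMap.smul_apply, smul_eq_mul]
      nlinarith
  rw [← Real.sqrt_mul hv.1.le, ← Real.sqrt_sq (apply_pos_of_mem_futureCone hsymm hneg hv hw).le]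
  exact Real.sqrt_le_sqrt hsq

theorem sqrt_mul_sqrt_lt_apply_or_apply_self_ne (hsymm : ∀ x y : E, β x y = β y x)
    (hneg : ∀ x : E, x ≠ 0 → β v₀ x = 0 → β x x < 0) (hv : v ∈ futureCone β v₀)
    (hw : w ∈ futureCone β v₀) (hvw : v ≠ w) :
    √(β v v) * √(β w w) < β v w ∨ β v v ≠ β w w := by
  rcases mul_apply_self_lt_sq_or_exists_eq_smul hsymm hneg hv.1 w with hlt | ⟨c, rfl⟩
  · left
    rw [← Real.sqrt_mul hv.1.le, ← Real.sqrt_sq (apply_pos_of_mem_futureCone hsymm hneg hv hw).le]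
    exact Real.sqrt_lt_sqrt (mul_pos hv.1 hw.1).le hlt
  · right
    intro hQ
    -- `w = c • v` lies in the cone only for `c > 0`, and `β(w,w) = c² β(v,v)` forces `c = 1`.
    have hc : 0 < c := by
      have := hw.2
      simp only [map_smul, smul_eq_mul] at this
      exact pos_of_mul_pos_left this hv.2.le
    have hc1 : c = 1 := by
      simp only [map_smul, LinearMap.smul_apply, smul_eq_mul] at hQ
      have : (c * c - 1) * β v v = 0 := by linear_combination -hQ
      have hcc := (mul_eq_zero.1 this).resolve_right hv.1.ne'
      nlinarith
    exact hvw (by rw [hc1, one_smul])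

theorem strictConvexOn_inv_apply_self (hsymm : ∀ x y : E, β x y = β y x)
    (hneg : ∀ x : E, x ≠ 0 → β v₀ x = 0 → β x x < 0) :
    StrictConvexOn ℝ (futureCone β v₀) fun v => (β v v)⁻¹ := by
  refine ⟨convex_futureCone hsymm hneg, fun v hv w hw hvw a b ha hb hab => ?_⟩
  set p := √(β v v)
  set r := √(β w w)
  have hp : 0 < p := Real.sqrt_pos.2 hv.1
  have hr : 0 < r := Real.sqrt_pos.2 hw.1
  have hpp : p ^ 2 = β v v := Real.sq_sqrt hv.1.le
  have hrr : r ^ 2 = β w w := Real.sq_sqrt hw.1.le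
  have hgap : β (a • v + b • w) (a • v + b • w) - (a * p + b * r) ^ 2
      = 2 * a * b * (β v w - p * r) := by
    rw [apply_smul_add_smul_self hsymm, ← hpp, ← hrr]
    ring
  have hjensen := strictConvexOn_inv_sq.convexOn.2 (mem_Ioi.2 hp) (mem_Ioi.2 hr) ha.le hb.le hab
  simp only [smul_eq_mul, hpp, hrr] at hjensen ⊢
  rcases sqrt_mul_sqrt_lt_apply_or_apply_self_ne hsymm hneg hv hw hvw with hlt | hne
  · calc (β (a • v + b • w) (a • v + b • w))⁻¹ < ((a * p + b * r) ^ 2)⁻¹ :=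
          inv_strictAnti₀ (by positivity) (by linarith [mul_pos (mul_pos ha hb) (sub_pos.2 hlt)])
      _ ≤ a * (β v v)⁻¹ + b * (β w w)⁻¹ := hjensen
  · have hpr : p ≠ r := fun h => hne (by rw [← hpp, ← hrr, h])
    have hle : (a * p + b * r) ^ 2 ≤ β (a • v + b • w) (a • v + b • w) := by
      have hcs := sqrt_mul_sqrt_le_apply hsymm hneg hv hw
      linarith [mul_nonneg (mul_pos ha hb).le (sub_nonneg.2 hcs)]
    calc (β (a • v + b • w) (a • v + b • w))⁻¹ ≤ ((a * p + b * r) ^ 2)⁻¹ :=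
          inv_anti₀ (by positivity) hle
      _ < a * (β v v)⁻¹ + b * (β w w)⁻¹ := by
          simpa [smul_eq_mul, hpp, hrr] using
            strictConvexOn_inv_sq.2 (mem_Ioi.2 hp) (mem_Ioi.2 hr) hpr ha hb hab

end Lorentzian

theorem lorentzian_cone_and_strict_convexity_general
    {E : Type*} [AddCommGroup E] [Module ℝ E]
    (β : E →ₗ[ℝ] E →ₗ[ℝ] ℝ) (hsymm : ∀ x y : E, β x y = β y x)
    (v₀ : E)
    (hneg : ∀ x : E, x ≠ 0 → β v₀ x = 0 → β x x < 0)
    (W : Set E) (hW : W = {v : E | 0 < β v v ∧ 0 < β v₀ v}) :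
    Convex ℝ W ∧ (∀ t : ℝ, 0 < t → ∀ v ∈ W, t • v ∈ W) ∧
      (∀ v ∈ W, ∀ w ∈ W, β v v ≤ β (v + w) (v + w) ∧
        (β (v + w) (v + w))⁻¹ ≤ (β v v)⁻¹) ∧
      (∀ v ∈ W, ∀ w ∈ W, v ≠ w → ∀ t : ℝ, 0 < t → t < 1 →
        (β (t • v + (1 - t) • w) (t • v + (1 - t) • w))⁻¹ <
          t * (β v v)⁻¹ + (1 - t) * (β w w)⁻¹) := by
  change W = futureCone β v₀ at hW
  subst hW
  refine ⟨convex_futureCone hsymm hneg, fun t ht v hv => smul_mem_futureCone ht hv,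
    fun v hv w hw => ?_, fun v hv w hw hvw t ht ht1 => ?_⟩
  · have hle := (apply_self_lt_apply_add_self hsymm hneg hv hw).le
    exact ⟨hle, inv_anti₀ hv.1 hle⟩
  · simpa using (strictConvexOn_inv_apply_self hsymm hneg).2 hv hw hvw ht (sub_pos.2 ht1)
      (add_sub_cancel t 1)

/-- For a Lorentzian symmetric bilinear form `β` with timelike vector `v₀`, the set
`W = {v : β(v,v) > 0, β(v₀,v) > 0}` is a convex cone, the function `χ(v) = β(v,v)⁻¹`
satisfies `β(v+w,v+w) ≥ β(v,v)` (equivalently `χ(v+w) ≤ χ(v)`) for `v, w ∈ W`, and `χ`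
is strictly convex on `W`. -/
theorem lorentzian_cone_and_strict_convexity
    {E : Type*} [AddCommGroup E] [Module ℝ E]
    (β : E →ₗ[ℝ] E →ₗ[ℝ] ℝ) (hsymm : ∀ x y : E, β x y = β y x)
    (v₀ : E) (hv₀ : 0 < β v₀ v₀)
    (hneg : ∀ x : E, x ≠ 0 → β v₀ x = 0 → β x x < 0)
    (W : Set E) (hW : W = {v : E | 0 < β v v ∧ 0 < β v₀ v}) :
    Convex ℝ W ∧ (∀ t : ℝ, 0 < t → ∀ v ∈ W, t • v ∈ W) ∧
      (∀ v ∈ W, ∀ w ∈ W, β v v ≤ β (v + w) (v + w) ∧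
        (β (v + w) (v + w))⁻¹ ≤ (β v v)⁻¹) ∧
      (∀ v ∈ W, ∀ w ∈ W, v ≠ w → ∀ t : ℝ, 0 < t → t < 1 →
        (β (t • v + (1 - t) • w) (t • v + (1 - t) • w))⁻¹ <
          t * (β v v)⁻¹ + (1 - t) * (β w w)⁻¹) :=
  lorentzian_cone_and_strict_convexity_general β hsymm v₀ hneg W hW
end
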